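/- arXiv:0812.0195 — 3 statements merged into one kernel-verified Lean document; each statement's English description precedes it below -/
import Mathlib

section
/- Let A = (v_1, …, v_q) ⊂ ℤ^n be a homogeneous normal configuration and let I_A ⊂ K[T_1, …, T_q] be its toric ideal. Then the following are equivalent: (a) I_A is generated by a finite set of circuits of I_A; (b) I_A is generated by a finite set of circuits of I_A each having a square-free term; (c) every unbalanced circuit of I_A has a connector which is a K[T_1, …, T_q]-linear combination of circuits of I_A having a square-free term. -/
open MvPolynomial

/-- The binomial `T^a - T^b` in `K[T_1,…,T_q]`. -/
noncomputable def binom (K : Type*) [Field K] {q : ℕ} (a b : Fin q → ℕ) :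
    MvPolynomial (Fin q) K :=
  monomial (Finsupp.equivFunOnFinite.symm a) 1 -
    monomial (Finsupp.equivFunOnFinite.symm b) 1

/-- The toric ideal of the configuration `v`. -/
noncomputable def toricIdeal (K : Type*) [Field K] {n q : ℕ} (v : Fin q → Fin n → ℤ) :
    Ideal (MvPolynomial (Fin q) K) :=
  Ideal.span { f | ∃ a b : Fin q → ℕ,
    (∑ i, a i • v i) = (∑ i, b i • v i) ∧ f = binom K a b }

/-- `α` is a circuit of the configuration `v`. -/
def IsCircuitVec {n q : ℕ} (v : Fin q → Fin n → ℤ) (α : Fin q → ℤ) : Prop :=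
  α ≠ 0 ∧ (∑ i, α i • v i) = 0 ∧
    (∀ β : Fin q → ℚ, (∑ i, β i • (fun l => (v i l : ℚ))) = 0 → β ≠ 0 →
      Function.support β ⊆ Function.support α →
      Function.support β = Function.support α) ∧
    Finset.univ.gcd α = 1

def posExp {q : ℕ} (α : Fin q → ℤ) : Fin q → ℕ := fun i => (α i).toNat

def negExp {q : ℕ} (α : Fin q → ℤ) : Fin q → ℕ := fun i => (-(α i)).toNat

/-- The binomial `T^a - T^b` has a square-free term. -/
def SqFreePair {q : ℕ} (a b : Fin q → ℕ) : Prop :=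
  (∀ i, a i ≤ 1) ∨ (∀ i, b i ≤ 1)

/-- `f` is a circuit of the toric ideal of `v`. -/
def IsCircuitPoly (K : Type*) [Field K] {n q : ℕ} (v : Fin q → Fin n → ℤ)
    (f : MvPolynomial (Fin q) K) : Prop :=
  ∃ α : Fin q → ℤ, IsCircuitVec v α ∧ f = binom K (posExp α) (negExp α)

/-- `f` is a circuit of the toric ideal of `v` having a square-free term. -/
def IsSqFreeCircuitPoly (K : Type*) [Field K] {n q : ℕ} (v : Fin q → Fin n → ℤ)
    (f : MvPolynomial (Fin q) K) : Prop :=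
  ∃ α : Fin q → ℤ, IsCircuitVec v α ∧ f = binom K (posExp α) (negExp α) ∧
    SqFreePair (posExp α) (negExp α)

/-- The configuration lies on an affine hyperplane off the origin. -/
def IsHomogeneousConfig {n q : ℕ} (v : Fin q → Fin n → ℤ) : Prop :=
  ∃ w : Fin n → ℝ, ∀ i, (∑ l, w l * (v i l : ℝ)) = 1

/-- `ℕA = ℤA ∩ ℝ₊A`. -/
def IsNormalConfig {n q : ℕ} (v : Fin q → Fin n → ℤ) : Prop :=
  ∀ x : Fin n → ℤ,
    x ∈ AddSubmonoid.closure (Set.range v) ↔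
      (x ∈ AddSubgroup.closure (Set.range v) ∧
        ∃ c : Fin q → ℝ, (∀ i, 0 ≤ c i) ∧ ∀ l, (x l : ℝ) = ∑ i, c i * (v i l : ℝ))

/-- The toric ideal is generated by a finite set of circuits. -/
def GenByCircuits (K : Type*) [Field K] {n q : ℕ} (v : Fin q → Fin n → ℤ) : Prop :=
  ∃ S : Finset (MvPolynomial (Fin q) K),
    (∀ f ∈ S, IsCircuitPoly K v f) ∧
      Ideal.span (S : Set (MvPolynomial (Fin q) K)) = toricIdeal K v

/-- The toric ideal is generated by a finite set of circuits with a square-free term. -/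
def GenBySqFreeCircuits (K : Type*) [Field K] {n q : ℕ} (v : Fin q → Fin n → ℤ) : Prop :=
  ∃ S : Finset (MvPolynomial (Fin q) K),
    (∀ f ∈ S, IsSqFreeCircuitPoly K v f) ∧
      Ideal.span (S : Set (MvPolynomial (Fin q) K)) = toricIdeal K v

/-- `f` is a connector of the unbalanced binomial `T^a - T^b`, where `a` is the term
with the smaller maximal exponent and `b` the one with the larger maximal exponent. -/
def IsConnector (K : Type*) [Field K] {n q : ℕ} (v : Fin q → Fin n → ℤ)
    (a b : Fin q → ℕ) (f : MvPolynomial (Fin q) K) : Prop :=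
  ∃ c d : Fin q → ℕ, f = binom K c d ∧ f ∈ toricIdeal K v ∧
    (∀ i, c i ≤ 1) ∧ (∀ i, c i ≠ 0 → a i ≠ 0) ∧ (∃ i, d i ≠ 0 ∧ b i ≠ 0)

/-- Every unbalanced circuit of the toric ideal has a connector which is a
`K[T]`-linear combination of circuits with a square-free term. -/
def ConnectorCondition (K : Type*) [Field K] {n q : ℕ} (v : Fin q → Fin n → ℤ) : Prop :=
  ∀ α : Fin q → ℤ, IsCircuitVec v α →
    Finset.univ.sup (posExp α) < Finset.univ.sup (negExp α) →
    ∃ f : MvPolynomial (Fin q) K, IsConnector K v (posExp α) (negExp α) f ∧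
      f ∈ Ideal.span { g : MvPolynomial (Fin q) K | IsSqFreeCircuitPoly K v g }

/-!
Let `J` be the ideal spanned by the circuits with a square-free term. Everything rests on
`I_A = J` under (a) or under (c): then (b) follows by Noetherianity, and for (a) ⇒ (c)
normality supplies, for an unbalanced circuit `α`, a connector `T^c - T^d` with `c` the support
of `α₊`, which lies in `I_A = J`.

We show `T^a - T^b ∈ J` by induction on the degree. A common variable can be factored out.
Otherwise take a circuit `α` conformal to `a - b`. If `α` has a square-free term, or is
unbalanced with a connector in `J`, exchanging that term inside `T^a` gives a monomial of the
same degree sharing a variable with `T^b`. If `α` is balanced with maximal entry `p ≥ 2`,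
normality turns `b + α / p - e_j - e_k` into a monomial sharing a variable with both `T^a` and
`T^b`; a suitable `k` exists, as otherwise `α = p (a - b)` would not be primitive.

Under (c) connectors lie in `J` by hypothesis. Under (a) it suffices to treat the circuit moves
`T^e (T^β₊ - T^β₋)`, since these join `a` to `b`. For a move the connector given by normality has
lower degree, hence lies in `J` by induction, unless `T^(e + β₊)` is square-free, and then `β`
itself has a square-free term.
-/

section Binomials

variable {K : Type*} [Field K] {q : ℕ}

theorem binom_add_binom (a b c : Fin q → ℕ) : binom K a b + binom K b c = binom K a c := by
  simp only [binom]; abel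

theorem binom_swap (a b : Fin q → ℕ) : binom K b a = -binom K a b := by
  simp only [binom]; abel

theorem binom_self (a : Fin q → ℕ) : binom K a a = 0 := sub_self _

theorem monomial_mul_binom (m : Fin q →₀ ℕ) (r : K) (a b : Fin q → ℕ) :
    monomial m r * binom K a b =
      monomial (m + Finsupp.equivFunOnFinite.symm a) r -
        monomial (m + Finsupp.equivFunOnFinite.symm b) r := by
  simp only [binom, mul_sub, monomial_mul, mul_one]

theorem binom_add_mem {I : Ideal (MvPolynomial (Fin q) K)} {a b : Fin q → ℕ}
    (h : binom K a b ∈ I) (e : Fin q → ℕ) : binom K (e + a) (e + b) ∈ I := by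
  have hsymm : ∀ c, Finsupp.equivFunOnFinite.symm (e + c) =
      Finsupp.equivFunOnFinite.symm e + Finsupp.equivFunOnFinite.symm c := fun c => by
    ext; simp
  have := I.mul_mem_left (monomial (Finsupp.equivFunOnFinite.symm e) 1) h
  rwa [monomial_mul_binom, ← hsymm, ← hsymm] at this

theorem rel_of_binom_mem_span (s : Setoid (Fin q → ℕ)) {T : Set (MvPolynomial (Fin q) K)}
    (hT : ∀ f ∈ T, ∃ c d, f = binom K c d ∧ ∀ e, s (e + c) (e + d)) {a b : Fin q → ℕ}
    (h : binom K a b ∈ Ideal.span T) : s a b := by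
  let L := AddMonoidAlgebra.mapDomainLinearMap K K (fun m : Fin q →₀ ℕ => Quotient.mk s ⇑m)
  have hL (m : Fin q →₀ ℕ) (r : K) : L (monomial m r) = .single (Quotient.mk s ⇑m) r :=
    AddMonoidAlgebra.mapDomainLinearMap_single _ _ _
  have hker : ∀ f ∈ Ideal.span T, ∀ g, L (g * f) = 0 := by
    intro f hf
    induction hf using Submodule.span_induction with
    | mem f hf =>
      obtain ⟨c, d, rfl, hcd⟩ := hT f hf
      intro g
      induction g using MvPolynomial.induction_on' with
      | monomial m r =>
        rw [monomial_mul_binom, map_sub, hL, hL, Finsupp.coe_add, Finsupp.coe_add,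
          Finsupp.coe_equivFunOnFinite_symm, Finsupp.coe_equivFunOnFinite_symm,
          Quotient.sound (hcd m), sub_self]
      | add g₁ g₂ h₁ h₂ => rw [add_mul, map_add, h₁, h₂, add_zero]
    | zero => simp
    | add f₁ f₂ _ _ h₁ h₂ => intro g; rw [mul_add, map_add, h₁, h₂, add_zero]
    | smul r f _ ih => intro g; rw [smul_eq_mul, ← mul_assoc]; exact ih _
  have h0 := hker _ h 1
  rw [one_mul, binom, map_sub, hL, hL, sub_eq_zero] at h0
  exact Quotient.exact (AddMonoidAlgebra.single_left_injective one_ne_zero h0)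

end Binomials

section Configuration

variable {n q : ℕ} (v : Fin q → Fin n → ℤ)

def adeg (a : Fin q → ℕ) : Fin n → ℤ := ∑ i, a i • v i

variable {v}

theorem adeg_add (a b : Fin q → ℕ) : adeg v (a + b) = adeg v a + adeg v b := by
  simp [adeg, add_smul, Finset.sum_add_distrib]

theorem adeg_apply (a : Fin q → ℕ) (l : Fin n) : adeg v a l = ∑ i, (a i : ℤ) * v i l := by
  simp [adeg, Finset.sum_apply]

theorem adeg_posExp_eq_negExp {α : Fin q → ℤ} (h : ∑ i, α i • v i = 0) :
    adeg v (posExp α) = adeg v (negExp α) := by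
  have hα : ∀ i, α i = (posExp α i : ℤ) - negExp α i := fun i => by
    simp only [posExp, negExp]; omega
  rw [← sub_eq_zero, adeg, adeg, ← Finset.sum_sub_distrib, ← h]
  refine Finset.sum_congr rfl fun i _ => ?_
  rw [hα i, sub_smul, natCast_zsmul, natCast_zsmul]

theorem sum_eq_of_adeg_eq (hhom : IsHomogeneousConfig v) {a b : Fin q → ℕ}
    (h : adeg v a = adeg v b) : ∑ i, a i = ∑ i, b i := by
  obtain ⟨w, hw⟩ := hhom
  have key (c : Fin q → ℕ) : ((∑ i, c i : ℕ) : ℝ) = ∑ l, w l * (adeg v c l : ℝ) := by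
    push_cast [adeg_apply]
    simp_rw [Finset.mul_sum]
    rw [Finset.sum_comm]
    refine Finset.sum_congr rfl fun i _ => ?_
    conv_lhs => rw [← mul_one (c i : ℝ), ← hw i, Finset.mul_sum]
    exact Finset.sum_congr rfl fun l _ => by ring
  exact_mod_cast (key a).trans (h ▸ (key b).symm)

theorem posExp_neg (α : Fin q → ℤ) : posExp (-α) = negExp α := rfl

theorem negExp_neg (α : Fin q → ℤ) : negExp (-α) = posExp α := by
  funext i; simp [negExp, posExp]

theorem IsCircuitVec.neg {α : Fin q → ℤ} (h : IsCircuitVec v α) : IsCircuitVec v (-α) := by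
  obtain ⟨h0, hker, hmin, hgcd⟩ := h
  refine ⟨neg_ne_zero.mpr h0, ?_, ?_, ?_⟩
  · simp only [Pi.neg_apply, neg_smul, Finset.sum_neg_distrib, hker, neg_zero]
  · simpa only [Function.support_neg] using hmin
  · rw [← hgcd]
    refine dvd_antisymm_of_normalize_eq Finset.normalize_gcd Finset.normalize_gcd ?_ ?_
    · exact Finset.dvd_gcd_iff.mpr fun i hi => by simpa using Finset.gcd_dvd (f := -α) hi
    · exact Finset.dvd_gcd_iff.mpr fun i hi => by simpa using Finset.gcd_dvd (f := α) hi

theorem IsCircuitVec.exists_negExp_ne_zero (hhom : IsHomogeneousConfig v) {α : Fin q → ℤ}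
    (hα : IsCircuitVec v α) : ∃ i, negExp α i ≠ 0 := by
  by_contra! h
  have hsum := sum_eq_of_adeg_eq hhom (adeg_posExp_eq_negExp hα.2.1)
  simp only [h, Finset.sum_const_zero, Finset.sum_eq_zero_iff, Finset.mem_univ,
    true_implies] at hsum
  refine hα.1 (funext fun i => ?_)
  have h₁ := hsum i
  have h₂ := h i
  simp only [posExp, negExp] at h₁ h₂
  simp only [Pi.zero_apply]
  omega

theorem IsCircuitVec.exists_posExp_ne_zero (hhom : IsHomogeneousConfig v) {α : Fin q → ℤ}
    (hα : IsCircuitVec v α) : ∃ i, posExp α i ≠ 0 := by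
  simpa only [negExp_neg] using hα.neg.exists_negExp_ne_zero hhom

end Configuration

section Conformal

variable {ι 𝕜 : Type*} [Field 𝕜] [LinearOrder 𝕜]

def ConformsTo (x y : ι → 𝕜) : Prop := ∀ i, x i = 0 ∨ 0 < x i * y i

theorem ConformsTo.refl [IsStrictOrderedRing 𝕜] (x : ι → 𝕜) : ConformsTo x x := fun i =>
  (eq_or_ne (x i) 0).imp id mul_self_pos.mpr

theorem ConformsTo.trans [IsStrictOrderedRing 𝕜] {x y z : ι → 𝕜} (hxy : ConformsTo x y)
    (hyz : ConformsTo y z) : ConformsTo x z := by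
  intro i
  rcases hxy i with h | h
  · exact .inl h
  rcases hyz i with h' | h'
  · simp [h'] at h
  · have key : x i * y i * (y i * z i) = x i * z i * (y i * y i) := by ring
    exact .inr (pos_of_mul_pos_left (key ▸ mul_pos h h') (mul_self_nonneg _))

theorem ConformsTo.support_subset {x y : ι → 𝕜} (h : ConformsTo x y) :
    Function.support x ⊆ Function.support y := fun i hi => by
  rcases h i with h | h
  · exact absurd h hi
  · rintro (h0 : y i = 0); simp [h0] at h

theorem ConformsTo.pos [IsStrictOrderedRing 𝕜] {x y : ι → 𝕜} (h : ConformsTo x y) {i : ι}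
    (hi : 0 < x i) : 0 < y i :=
  pos_of_mul_pos_right ((h i).resolve_left hi.ne') hi.le

theorem ConformsTo.neg [IsStrictOrderedRing 𝕜] {x y : ι → 𝕜} (h : ConformsTo x y) {i : ι}
    (hi : x i < 0) : y i < 0 :=
  neg_of_mul_pos_right ((h i).resolve_left hi.ne) hi.le

/-- Elimination: `δ - t • β`, with `t` the least ratio `δ i / β i` over the coordinates where `β`
and `δ` have the same sign, still conforms to `δ` and vanishes at the minimizing coordinate. -/
theorem exists_conformsTo_support_ssubset_of_pos [IsStrictOrderedRing 𝕜] [Fintype ι]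
    {W : Submodule 𝕜 (ι → 𝕜)} {δ β : ι → 𝕜} (hδ : δ ∈ W) (hβ : β ∈ W)
    (hsub : Function.support β ⊂ Function.support δ) (hpos : ∃ i, 0 < β i * δ i) :
    ∃ δ' ∈ W, δ' ≠ 0 ∧ ConformsTo δ' δ ∧ Function.support δ' ⊂ Function.support δ := by
  obtain ⟨i₁, hi₁⟩ := hpos
  set T := Finset.univ.filter fun i => 0 < β i * δ i
  obtain ⟨i₀, hi₀T, hmin⟩ := T.exists_min_image (fun i => δ i / β i) ⟨i₁, by simp [T, hi₁]⟩
  have hi₀ : 0 < β i₀ * δ i₀ := (Finset.mem_filter.mp hi₀T).2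
  have hβi₀ : β i₀ ≠ 0 := left_ne_zero_of_mul hi₀.ne'
  set t := δ i₀ / β i₀
  have ht : 0 < t := div_pos_iff.mpr (mul_pos_iff.mp (by rwa [mul_comm] at hi₀))
  set δ' := δ - t • β
  have hδ'i₀ : δ' i₀ = 0 := by simp [δ', t, hβi₀]
  have hconf : ConformsTo δ' δ := by
    intro i
    by_cases hδi : δ i = 0
    · have hβi : β i = 0 := Function.notMem_support.mp fun h => hsub.1 h hδi
      simp [δ', hδi, hβi]
    have hnonneg : 0 ≤ δ' i * δ i := by
      have hδ'i : δ' i * δ i = δ i * δ i - t * (β i * δ i) := by simp [δ']; ring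
      by_cases hTi : 0 < β i * δ i
      · have hβi : β i ≠ 0 := left_ne_zero_of_mul hTi.ne'
        have hti : t ≤ δ i / β i := hmin i (by simp [T, hTi])
        rw [hδ'i, show δ i * δ i = δ i / β i * (β i * δ i) by field_simp]
        nlinarith
      · nlinarith [mul_self_nonneg (δ i)]
    rcases hnonneg.lt_or_eq with h | h
    · exact .inr h
    · exact .inl ((mul_eq_zero.mp h.symm).resolve_right hδi)
  obtain ⟨j, hjδ, hjβ⟩ := Set.exists_of_ssubset hsub
  have hδ'j : δ' j = δ j := by simp [δ', Function.notMem_support.mp hjβ]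
  refine ⟨δ', W.sub_mem hδ (W.smul_mem t hβ), fun h => hjδ (by simp [← hδ'j, h]), hconf,
    Set.ssubset_iff_subset_ne.mpr ⟨hconf.support_subset, fun h => ?_⟩⟩
  have : i₀ ∈ Function.support δ' := h ▸ right_ne_zero_of_mul hi₀.ne'
  exact this hδ'i₀

theorem exists_conformsTo_support_ssubset [IsStrictOrderedRing 𝕜] [Fintype ι]
    {W : Submodule 𝕜 (ι → 𝕜)} {δ β : ι → 𝕜} (hδ : δ ∈ W) (hβ : β ∈ W) (hβ0 : β ≠ 0)
    (hsub : Function.support β ⊂ Function.support δ) :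
    ∃ δ' ∈ W, δ' ≠ 0 ∧ ConformsTo δ' δ ∧ Function.support δ' ⊂ Function.support δ := by
  obtain ⟨i, hi⟩ : ∃ i, β i ≠ 0 := by
    by_contra! h; exact hβ0 (funext h)
  rcases (mul_ne_zero hi (hsub.1 hi)).lt_or_gt with hneg | hpos
  · refine exists_conformsTo_support_ssubset_of_pos hδ (W.neg_mem hβ)
      (by rwa [Function.support_neg]) ⟨i, ?_⟩
    simpa [neg_mul] using hneg
  · exact exists_conformsTo_support_ssubset_of_pos hδ hβ hsub ⟨i, hpos⟩

theorem exists_conformsTo_minimal [IsStrictOrderedRing 𝕜] [Fintype ι] {W : Submodule 𝕜 (ι → 𝕜)}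
    {δ : ι → 𝕜} (hδ : δ ∈ W) (hδ0 : δ ≠ 0) :
    ∃ δ' ∈ W, δ' ≠ 0 ∧ ConformsTo δ' δ ∧ ∀ β ∈ W, β ≠ 0 →
      Function.support β ⊆ Function.support δ' → Function.support β = Function.support δ' := by
  induction h : (Function.support δ).ncard using Nat.strong_induction_on generalizing δ with
  | _ N ih =>
  by_cases hmin : ∀ β ∈ W, β ≠ 0 →
      Function.support β ⊆ Function.support δ → Function.support β = Function.support δ
  · exact ⟨δ, hδ, hδ0, .refl δ, hmin⟩
  push Not at hmin
  obtain ⟨β, hβ, hβ0, hsub, hne⟩ := hmin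
  obtain ⟨δ', hδ', hδ'0, hconf, hss⟩ :=
    exists_conformsTo_support_ssubset hδ hβ hβ0 (Set.ssubset_iff_subset_ne.mpr ⟨hsub, hne⟩)
  obtain ⟨δ'', hδ'', hδ''0, hconf', hmin⟩ :=
    ih _ (h ▸ Set.ncard_lt_ncard hss (Set.toFinite _)) hδ' hδ'0 rfl
  exact ⟨δ'', hδ'', hδ''0, hconf'.trans hconf, hmin⟩

end Conformal

theorem exists_primitive_int_smul {ι : Type*} [Fintype ι] {δ : ι → ℚ} (hδ : δ ≠ 0) :
    ∃ (α : ι → ℤ) (c : ℚ), 0 < c ∧ (∀ i, (α i : ℚ) = c * δ i) ∧ Finset.univ.gcd α = 1 := by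
  classical
  obtain ⟨i₁, hi₁⟩ : ∃ i, δ i ≠ 0 := by by_contra! h; exact hδ (funext h)
  set m : ℕ := ∏ i, (δ i).den
  have hm : (0 : ℚ) < m := by exact_mod_cast Finset.prod_pos fun i _ => (δ i).pos
  set α₀ : ι → ℤ := fun i => (δ i).num * ∏ j ∈ Finset.univ.erase i, ((δ j).den : ℤ)
  have hα₀ (i : ι) : (α₀ i : ℚ) = m * δ i := by
    simp only [α₀, m, ← Finset.mul_prod_erase _ _ (Finset.mem_univ i)]
    push_cast
    rw [← Rat.mul_den_eq_num]
    ring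
  obtain ⟨α, hα, hgcd⟩ := Finset.extract_gcd α₀ ⟨i₁, Finset.mem_univ _⟩
  set g := Finset.univ.gcd α₀
  have hg0 : g ≠ 0 := fun h => by
    have := Finset.gcd_eq_zero_iff.mp h i₁ (Finset.mem_univ _)
    rw [← Int.cast_eq_zero (α := ℚ), hα₀] at this
    exact mul_ne_zero hm.ne' hi₁ this
  have hg : (0 : ℚ) < g := by
    exact_mod_cast (Int.nonneg_of_normalize_eq_self Finset.normalize_gcd).lt_of_ne' hg0
  refine ⟨α, m / g, div_pos hm hg, fun i => ?_, hgcd⟩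
  have := hα₀ i
  rw [hα i (Finset.mem_univ _), Int.cast_mul] at this
  field_simp
  linarith

section Circuits

variable {n q : ℕ} {v : Fin q → Fin n → ℤ}

theorem sum_sub_smul_eq_zero {a b : Fin q → ℕ} (hab : adeg v a = adeg v b) :
    ∑ i, ((a i : ℚ) - b i) • (fun l => (v i l : ℚ)) = 0 := by
  funext l
  have := congrArg (Int.cast : ℤ → ℚ) (congrFun hab l)
  push_cast [adeg_apply] at this
  simp [sub_mul, Finset.sum_sub_distrib, this]

variable (v) in
def IsConformalCircuit (α : Fin q → ℤ) (a b : Fin q → ℕ) : Prop :=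
  IsCircuitVec v α ∧ (∀ i, 0 < α i → b i < a i) ∧ (∀ i, α i < 0 → a i < b i)

theorem exists_isConformalCircuit {a b : Fin q → ℕ} (hab : adeg v a = adeg v b) (hne : a ≠ b) :
    ∃ α, IsConformalCircuit v α a b := by
  set W := LinearMap.ker (Fintype.linearCombination ℚ fun i l => (v i l : ℚ))
  have hW (β : Fin q → ℚ) : β ∈ W ↔ ∑ i, β i • (fun l => (v i l : ℚ)) = 0 := by
    rw [LinearMap.mem_ker, Fintype.linearCombination_apply]
  set γ : Fin q → ℚ := fun i => (a i : ℚ) - b i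
  have hγ : γ ∈ W := (hW γ).mpr (sum_sub_smul_eq_zero hab)
  have hγ0 : γ ≠ 0 := fun h => hne (funext fun i => by
    have := congrFun h i; simp only [γ, Pi.zero_apply, sub_eq_zero] at this; exact_mod_cast this)
  obtain ⟨δ, hδ, hδ0, hconf, hmin⟩ := exists_conformsTo_minimal hγ hγ0
  obtain ⟨α, c, hc, hαδ, hgcd⟩ := exists_primitive_int_smul hδ0
  have hsupp : Function.support α = Function.support δ := by
    ext i; simp [← Int.cast_ne_zero (α := ℚ), hαδ, hc.ne']
  refine ⟨α, ⟨fun h => hδ0 (funext fun i => ?_), ?_, ?_, hgcd⟩, fun i hi => ?_, fun i hi => ?_⟩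
  · simpa [h, hc.ne'] using (hαδ i).symm
  · funext l
    have h := congrFun ((hW δ).mp hδ) l
    simp only [Finset.sum_apply, Pi.smul_apply, smul_eq_mul, Pi.zero_apply] at h ⊢
    have : ((∑ i, α i * v i l : ℤ) : ℚ) = c * ∑ i, δ i * v i l := by
      push_cast; simp only [hαδ, Finset.mul_sum]; ring_nf
    have h' : ((∑ i, α i * v i l : ℤ) : ℚ) = 0 := this.trans (by rw [h, mul_zero])
    exact_mod_cast h'
  · intro β hβ hβ0 hβsub
    rw [hsupp] at hβsub ⊢
    exact hmin β ((hW β).mpr hβ) hβ0 hβsub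
  · have : 0 < γ i := hconf.pos (pos_of_mul_pos_right (by rw [← hαδ]; exact_mod_cast hi) hc.le)
    simp only [γ, sub_pos] at this; exact_mod_cast this
  · have : γ i < 0 := hconf.neg (neg_of_mul_neg_right (by rw [← hαδ]; exact_mod_cast hi) hc.le)
    simp only [γ, sub_neg] at this; exact_mod_cast this

theorem sum_mul_apply_eq_zero {α : Fin q → ℤ} (hα : ∑ i, α i • v i = 0) (l : Fin n) :
    ∑ i, α i * v i l = 0 := by
  simpa [Finset.sum_apply] using congrFun hα l

/-- `adeg v b - adeg v e = ∑ i, (b i - e i + α i / s) • v i` has nonnegative real coefficients,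
so by normality it is some `adeg v u₀`; take `u = u₀ + e`. -/
theorem exists_adeg_eq_of_smul_le (hnorm : IsNormalConfig v) {α : Fin q → ℤ}
    (hα : ∑ i, α i • v i = 0) {s : ℕ} (hs : 0 < s) (b e : Fin q → ℕ)
    (hle : ∀ i, (s : ℤ) * e i ≤ s * b i + α i) : ∃ u, adeg v u = adeg v b ∧ e ≤ u := by
  set c : Fin q → ℝ := fun i => ((s * b i + α i - s * e i : ℤ) : ℝ) / s
  have hc (l : Fin n) : ((adeg v b l - adeg v e l : ℤ) : ℝ) = ∑ i, c i * v i l := by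
    have hint : ∑ i, (s * b i + α i - s * e i) * v i l = s * (adeg v b l - adeg v e l) := by
      simp only [adeg_apply, add_sub_right_comm, add_mul, Finset.sum_add_distrib,
        sum_mul_apply_eq_zero hα, add_zero, sub_mul, Finset.sum_sub_distrib, mul_sub,
        Finset.mul_sum, mul_assoc]
    have hs' : (s : ℝ) ≠ 0 := by positivity
    simp only [c, div_mul_eq_mul_div, ← Finset.sum_div]
    rw [eq_div_iff hs', ← Int.cast_natCast, ← Int.cast_mul, mul_comm]
    exact_mod_cast hint.symm
  have hgroup (u : Fin q → ℕ) : adeg v u ∈ AddSubgroup.closure (Set.range v) :=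
    AddSubgroup.mem_closure_range_iff_of_fintype.mpr ⟨fun i => u i, by simp [adeg]⟩
  obtain ⟨u₀, hu₀⟩ := AddSubmonoid.mem_closure_range_iff_of_fintype.mp <|
    (hnorm (adeg v b - adeg v e)).mpr ⟨sub_mem (hgroup b) (hgroup e), c,
      fun i => div_nonneg (by exact_mod_cast sub_nonneg.mpr (hle i)) s.cast_nonneg,
      fun l => by exact_mod_cast hc l⟩
  refine ⟨u₀ + e, ?_, le_add_self⟩
  rw [adeg_add, adeg, ← hu₀, sub_add_cancel]

theorem IsCircuitVec.exists_connector (hhom : IsHomogeneousConfig v) (hnorm : IsNormalConfig v)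
    {α : Fin q → ℤ} (hα : IsCircuitVec v α)
    (hle : Finset.univ.sup (posExp α) ≤ Finset.univ.sup (negExp α)) :
    ∃ d k, adeg v d = adeg v (fun i => min 1 (posExp α i)) ∧ d k ≠ 0 ∧ α k < 0 := by
  set p := Finset.univ.sup (posExp α)
  set c : Fin q → ℕ := fun i => min 1 (posExp α i)
  obtain ⟨i₁, hi₁⟩ := hα.exists_posExp_ne_zero hhom
  have hp : 0 < p := by
    have : posExp α i₁ ≤ p := Finset.le_sup (Finset.mem_univ _)
    omega
  obtain ⟨k, -, hk⟩ := Finset.exists_mem_eq_sup Finset.univ ⟨i₁, Finset.mem_univ _⟩ (negExp α)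
  have hαk : α k ≤ -p := by simp only [negExp] at hk; omega
  have hαc (i : Fin q) : α i ≤ p * c i := by
    have : posExp α i ≤ p := Finset.le_sup (Finset.mem_univ _)
    rcases le_or_gt (α i) 0 with h | h
    · have : (0 : ℤ) ≤ p * c i := by positivity
      omega
    · have hc : c i = 1 := by simp only [c, posExp]; omega
      simp only [hc, posExp] at this ⊢; omega
  obtain ⟨d, hd, hkd⟩ := exists_adeg_eq_of_smul_le hnorm hα.neg.2.1 hp c (Pi.single k 1)
    fun i => by
      rcases eq_or_ne i k with rfl | hik
      · simp [c, posExp, show (α i).toNat = 0 by omega]; omega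
      · simp [hik]; linarith [hαc i]
  exact ⟨d, k, hd, by have := hkd k; simp at this; omega, by omega⟩

theorem IsConformalCircuit.neg {α : Fin q → ℤ} {a b : Fin q → ℕ}
    (h : IsConformalCircuit v α a b) : IsConformalCircuit v (-α) b a :=
  ⟨h.1.neg, fun i hi => h.2.2 i (by simpa using hi), fun i hi => h.2.1 i (by simpa using hi)⟩

theorem IsCircuitVec.mul_eq_mul_of_support_subset {α : Fin q → ℤ} (hα : IsCircuitVec v α)
    {β : Fin q → ℚ} (hβ : ∑ i, β i • (fun l => (v i l : ℚ)) = 0)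
    (hsub : Function.support β ⊆ Function.support α) {j : Fin q} (hj : α j ≠ 0) (i : Fin q) :
    β i * α j = β j * α i := by
  set δ : Fin q → ℚ := fun i => β i * α j - β j * α i
  have hδ : ∑ i, δ i • (fun l => (v i l : ℚ)) = 0 := by
    funext l
    have hβl := congrFun hβ l
    have hαl := congrArg (Int.cast : ℤ → ℚ) (sum_mul_apply_eq_zero hα.2.1 l)
    simp only [Finset.sum_apply, Pi.smul_apply, smul_eq_mul, Pi.zero_apply] at hβl ⊢
    push_cast at hαl
    calc ∑ i, δ i * v i l = α j * ∑ i, β i * v i l - β j * ∑ i, (α i : ℚ) * v i l := by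
          simp only [δ, Finset.mul_sum, ← Finset.sum_sub_distrib]
          exact Finset.sum_congr rfl fun i _ => by ring
      _ = 0 := by rw [hβl, hαl, mul_zero, mul_zero, sub_zero]
  by_contra hne
  have hδ0 : δ ≠ 0 := fun h => hne (sub_eq_zero.mp (congrFun h i))
  have hδsub : Function.support δ ⊆ Function.support α := fun k hk => by
    by_contra hαk
    simp only [Function.mem_support, not_not] at hαk
    have hβk : β k = 0 := Function.notMem_support.mp fun h => hsub h hαk
    simp [δ, hαk, hβk] at hk
  have := hα.2.2.1 δ hδ hδ0 hδsub
  have hj' : j ∈ Function.support δ := this ▸ hj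
  exact hj' (by simp [δ])

theorem IsConformalCircuit.exists_two_le_or_eq_zero {α : Fin q → ℤ} {a b : Fin q → ℕ}
    (hα : IsConformalCircuit v α a b) (hab : adeg v a = adeg v b) {p : ℕ} (hp : 2 ≤ p)
    {j : Fin q} (hj : α j = p) :
    (∃ k, b k ≠ 0 ∧ (2 ≤ b k ∨ α k = 0)) ∨ (∃ k, a k ≠ 0 ∧ (2 ≤ a k ∨ α k = 0)) := by
  by_contra! h
  obtain ⟨hb, ha⟩ := h
  have hj' : a j = 1 ∧ b j = 0 := by have := hα.2.1 j (by omega); have := ha j; omega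
  have hsub : Function.support (fun i => (a i : ℚ) - b i) ⊆ Function.support α := fun i hi => by
    by_cases hai : a i = 0
    · exact (hb i fun h => hi (by simp [hai, h])).2
    · exact (ha i hai).2
  have hprop := hα.1.mul_eq_mul_of_support_subset (sum_sub_smul_eq_zero hab) hsub
    (j := j) (by omega)
  have hdvd : (p : ℤ) ∣ Finset.univ.gcd α := Finset.dvd_gcd fun i _ => by
    have := hprop i
    simp only [hj, hj'] at this
    push_cast at this
    exact ⟨a i - b i, by exact_mod_cast (by linarith : (α i : ℚ) = p * ((a i : ℚ) - b i))⟩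
  rw [hα.1.2.2.2] at hdvd
  have := Int.le_of_dvd one_pos hdvd
  omega

end Circuits

section Descent

variable {K : Type*} [Field K] {n q : ℕ} {v : Fin q → Fin n → ℤ}

variable (K v) in
noncomputable def sqFreeCircuitIdeal : Ideal (MvPolynomial (Fin q) K) :=
  Ideal.span {g | IsSqFreeCircuitPoly K v g}

variable (K v) in
def BinomMemBelow (D : ℕ) : Prop :=
  ∀ a b : Fin q → ℕ, ∑ i, a i < D → adeg v a = adeg v b → binom K a b ∈ sqFreeCircuitIdeal K v

theorem binom_mem_sqFreeCircuitIdeal {α : Fin q → ℤ} (hα : IsCircuitVec v α)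
    (h : SqFreePair (posExp α) (negExp α)) :
    binom K (posExp α) (negExp α) ∈ sqFreeCircuitIdeal K v :=
  Ideal.subset_span ⟨α, hα, rfl, h⟩

theorem binom_mem_of_common_var {a b : Fin q → ℕ} (IH : BinomMemBelow K v (∑ i, a i))
    (hab : adeg v a = adeg v b) {i : Fin q} (ha : a i ≠ 0) (hb : b i ≠ 0) :
    binom K a b ∈ sqFreeCircuitIdeal K v := by
  set e : Fin q → ℕ := Pi.single i 1
  have hle {c : Fin q → ℕ} (hc : c i ≠ 0) : e ≤ c := fun j => by
    rcases eq_or_ne j i with rfl | h <;> simp [e, *]; omega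
  obtain ⟨a', rfl⟩ : ∃ a', a = e + a' := ⟨a - e, (add_tsub_cancel_of_le (hle ha)).symm⟩
  obtain ⟨b', rfl⟩ : ∃ b', b = e + b' := ⟨b - e, (add_tsub_cancel_of_le (hle hb)).symm⟩
  refine binom_add_mem (IH a' b' ?_ (add_left_cancel (by rwa [← adeg_add, ← adeg_add]))) e
  simp [Finset.sum_add_distrib, e]

theorem binom_mem_of_move (hhom : IsHomogeneousConfig v) {a b c d : Fin q → ℕ}
    (IH : BinomMemBelow K v (∑ i, a i)) (hab : adeg v a = adeg v b) (hca : c ≤ a)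
    (hcd : adeg v c = adeg v d) (hJ : binom K c d ∈ sqFreeCircuitIdeal K v) {i : Fin q}
    (hdi : d i ≠ 0) (hbi : b i ≠ 0) : binom K a b ∈ sqFreeCircuitIdeal K v := by
  obtain ⟨a', rfl⟩ : ∃ a', a = a' + c := ⟨a - c, (tsub_add_cancel_of_le hca).symm⟩
  have hsum := sum_eq_of_adeg_eq hhom (by rw [adeg_add, adeg_add, hcd] :
    adeg v (a' + c) = adeg v (a' + d))
  rw [← binom_add_binom _ (a' + d)]
  refine add_mem (binom_add_mem hJ a') (binom_mem_of_common_var (hsum ▸ IH) ?_ (by simp [hdi]) hbi)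
  rw [← hab, adeg_add, adeg_add, hcd]

theorem binom_mem_of_bridge (hhom : IsHomogeneousConfig v) (hnorm : IsNormalConfig v)
    {a b : Fin q → ℕ} {α : Fin q → ℤ} (IH : BinomMemBelow K v (∑ i, a i))
    (hab : adeg v a = adeg v b) (hdisj : ∀ i, a i = 0 ∨ b i = 0)
    (hα : IsConformalCircuit v α a b) {p : ℕ} (hbound : ∀ i, |α i| ≤ p) {j : Fin q}
    (hj : α j = p) (hp : 0 < p) {k : Fin q} (hk : b k ≠ 0) (hk' : 2 ≤ b k ∨ α k = 0) :
    binom K a b ∈ sqFreeCircuitIdeal K v := by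
  have hjk : j ≠ k := by rintro rfl; have := hα.2.1 j (by omega); have := hdisj j; omega
  obtain ⟨u, hu, heu⟩ := exists_adeg_eq_of_smul_le hnorm hα.1.2.1 hp b
    (Pi.single j 1 + Pi.single k 1) fun i => by
      have := abs_le.mp (hbound i)
      rcases eq_or_ne i j with rfl | hij
      · have := hα.2.1 i (by omega)
        have hbi : b i = 0 := by have := hdisj i; omega
        simp [hjk, hbi, hj]
      rcases eq_or_ne i k with rfl | hik
      · have : (1 : ℤ) ≤ b i := by exact_mod_cast Nat.one_le_iff_ne_zero.mpr hk
        simp [hij]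
        rcases hk' with h | h
        · nlinarith
        · simp [h]; nlinarith
      · simp [hij, hik]
        rcases le_or_gt 0 (α i) with h | h
        · positivity
        · have : 1 ≤ b i := by have := hα.2.2 i h; omega
          nlinarith
  have hsum := sum_eq_of_adeg_eq hhom (hab.trans hu.symm)
  rw [← binom_add_binom _ u]
  refine add_mem (binom_mem_of_common_var IH (hab.trans hu.symm) (i := j) ?_ ?_)
    (binom_mem_of_common_var (hsum ▸ IH) hu (i := k) ?_ hk)
  · have := hα.2.1 j (by omega); omega
  · have := heu j; simp [hjk] at this; omega
  · have := heu k; simp [hjk] at this; omega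

theorem binom_mem_of_balanced (hhom : IsHomogeneousConfig v) (hnorm : IsNormalConfig v)
    {a b : Fin q → ℕ} {α : Fin q → ℤ} (IH : BinomMemBelow K v (∑ i, a i))
    (hab : adeg v a = adeg v b) (hdisj : ∀ i, a i = 0 ∨ b i = 0)
    (hα : IsConformalCircuit v α a b) (hp : 2 ≤ Finset.univ.sup (posExp α))
    (hbal : Finset.univ.sup (posExp α) = Finset.univ.sup (negExp α)) :
    binom K a b ∈ sqFreeCircuitIdeal K v := by
  set p := Finset.univ.sup (posExp α)
  obtain ⟨i₁, -⟩ := hα.1.exists_posExp_ne_zero hhom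
  obtain ⟨j, -, hj⟩ := Finset.exists_mem_eq_sup Finset.univ ⟨i₁, Finset.mem_univ _⟩ (posExp α)
  obtain ⟨k, -, hk⟩ := Finset.exists_mem_eq_sup Finset.univ ⟨i₁, Finset.mem_univ _⟩ (negExp α)
  have hbound (i : Fin q) : |α i| ≤ p := by
    have h₁ : posExp α i ≤ p := Finset.le_sup (Finset.mem_univ i)
    have h₂ : negExp α i ≤ Finset.univ.sup (negExp α) := Finset.le_sup (Finset.mem_univ i)
    simp only [posExp, negExp] at h₁ h₂
    rw [abs_le]; omega
  have hαj : α j = p := by simp only [p, posExp] at hj ⊢; omega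
  have hαk : (-α) k = p := by simp only [p, hbal, negExp] at hk ⊢; simp; omega
  rcases hα.exists_two_le_or_eq_zero hab hp hαj with ⟨k', hk', hk''⟩ | ⟨k', hk', hk''⟩
  · exact binom_mem_of_bridge hhom hnorm IH hab hdisj hα hbound hαj (by omega) hk' hk''
  · rw [binom_swap]
    refine neg_mem (binom_mem_of_bridge hhom hnorm (sum_eq_of_adeg_eq hhom hab ▸ IH) hab.symm
      (fun i => (hdisj i).symm) hα.neg (fun i => by simpa using hbound i) hαk (by omega) hk' ?_)
    simpa using hk''

theorem binom_mem_of_sup_le (hhom : IsHomogeneousConfig v) (hnorm : IsNormalConfig v)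
    {a b : Fin q → ℕ} {α : Fin q → ℤ} (IH : BinomMemBelow K v (∑ i, a i))
    (hab : adeg v a = adeg v b) (hdisj : ∀ i, a i = 0 ∨ b i = 0)
    (hα : IsConformalCircuit v α a b)
    (hle : Finset.univ.sup (posExp α) ≤ Finset.univ.sup (negExp α))
    (hunb : Finset.univ.sup (posExp α) < Finset.univ.sup (negExp α) →
      binom K a b ∈ sqFreeCircuitIdeal K v) :
    binom K a b ∈ sqFreeCircuitIdeal K v := by
  rcases le_or_gt (Finset.univ.sup (posExp α)) 1 with hsf | h2
  · have hsf' (i : Fin q) : posExp α i ≤ 1 := (Finset.le_sup (Finset.mem_univ i)).trans hsf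
    obtain ⟨i, hi⟩ := hα.1.exists_negExp_ne_zero hhom
    refine binom_mem_of_move hhom IH hab (fun i => ?_) (adeg_posExp_eq_negExp hα.1.2.1)
      (binom_mem_sqFreeCircuitIdeal hα.1 (.inl hsf')) hi ?_
    · have := hsf' i
      simp only [posExp] at this ⊢
      rcases lt_or_ge 0 (α i) with h | h
      · have := hα.2.1 i h; omega
      · omega
    · have := hα.2.2 i (by simp only [negExp] at hi; omega); omega
  rcases hle.lt_or_eq with hlt | heq
  · exact hunb hlt
  · exact binom_mem_of_balanced hhom hnorm IH hab hdisj hα h2 heq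

theorem binom_mem_of_forall_unbalanced (hhom : IsHomogeneousConfig v) (hnorm : IsNormalConfig v)
    {a b : Fin q → ℕ} (IH : BinomMemBelow K v (∑ i, a i)) (hab : adeg v a = adeg v b)
    (hunb : ∀ α, IsConformalCircuit v α a b →
      Finset.univ.sup (posExp α) < Finset.univ.sup (negExp α) →
      binom K a b ∈ sqFreeCircuitIdeal K v)
    (hunb' : ∀ α, IsConformalCircuit v α b a →
      Finset.univ.sup (posExp α) < Finset.univ.sup (negExp α) →
      binom K b a ∈ sqFreeCircuitIdeal K v) :
    binom K a b ∈ sqFreeCircuitIdeal K v := by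
  by_cases hcommon : ∃ i, a i ≠ 0 ∧ b i ≠ 0
  · obtain ⟨i, ha, hb⟩ := hcommon
    exact binom_mem_of_common_var IH hab ha hb
  have hdisj (i : Fin q) : a i = 0 ∨ b i = 0 := by
    by_contra! h; exact hcommon ⟨i, h⟩
  rcases eq_or_ne a b with rfl | hne
  · rw [binom_self]; exact zero_mem _
  obtain ⟨α, hα⟩ := exists_isConformalCircuit hab hne
  rcases le_total (Finset.univ.sup (posExp α)) (Finset.univ.sup (negExp α)) with hle | hle
  · exact binom_mem_of_sup_le hhom hnorm IH hab hdisj hα hle (hunb α hα)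
  · rw [binom_swap]
    refine neg_mem (binom_mem_of_sup_le hhom hnorm (sum_eq_of_adeg_eq hhom hab ▸ IH) hab.symm
      (fun i => (hdisj i).symm) hα.neg ?_ (hunb' _ hα.neg))
    rwa [posExp_neg, negExp_neg]

theorem toricIdeal_le_of_forall_binomMemBelow
    (hstep : ∀ a b, BinomMemBelow K v (∑ i, a i) → adeg v a = adeg v b →
      binom K a b ∈ sqFreeCircuitIdeal K v) :
    toricIdeal K v ≤ sqFreeCircuitIdeal K v := by
  rw [toricIdeal, Ideal.span_le]
  rintro f ⟨a, b, hab, rfl⟩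
  induction h : ∑ i, a i using Nat.strong_induction_on generalizing a b with
  | _ D ih => exact hstep a b (fun a' b' hlt hab' => ih _ (h ▸ hlt) a' b' hab' rfl) hab

theorem adeg_eq_of_binom_mem_toricIdeal {c d : Fin q → ℕ} (h : binom K c d ∈ toricIdeal K v) :
    adeg v c = adeg v d :=
  rel_of_binom_mem_span (Setoid.ker (adeg v)) (by
    rintro _ ⟨c, d, hcd, rfl⟩
    refine ⟨c, d, rfl, fun e => ?_⟩
    change adeg v (e + c) = adeg v (e + d)
    rw [adeg_add, adeg_add, show adeg v c = adeg v d from hcd]) h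

theorem ConnectorCondition.binom_mem_of_unbalanced (hC : ConnectorCondition K v)
    (hhom : IsHomogeneousConfig v) {a b : Fin q → ℕ} {α : Fin q → ℤ}
    (IH : BinomMemBelow K v (∑ i, a i)) (hab : adeg v a = adeg v b)
    (hα : IsConformalCircuit v α a b)
    (hlt : Finset.univ.sup (posExp α) < Finset.univ.sup (negExp α)) :
    binom K a b ∈ sqFreeCircuitIdeal K v := by
  obtain ⟨f, ⟨c, d, rfl, hf, hc₁, hca, j, hdj, hbj⟩, hJ⟩ := hC α hα.1 hlt
  refine binom_mem_of_move hhom IH hab (fun i => ?_) (adeg_eq_of_binom_mem_toricIdeal hf) hJ hdj ?_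
  · show c i ≤ a i
    rcases eq_or_ne (c i) 0 with h | h
    · simp [h]
    · have := hα.2.1 i (by have := hca i h; simp only [posExp] at this; omega)
      have := hc₁ i; omega
  · have := hα.2.2 j (by simp only [negExp] at hbj; omega); omega

theorem toricIdeal_le_of_connectorCondition (hhom : IsHomogeneousConfig v)
    (hnorm : IsNormalConfig v) (hC : ConnectorCondition K v) :
    toricIdeal K v ≤ sqFreeCircuitIdeal K v :=
  toricIdeal_le_of_forall_binomMemBelow fun _ _ IH hab =>
    binom_mem_of_forall_unbalanced hhom hnorm IH hab
      (fun _ hα hlt => hC.binom_mem_of_unbalanced hhom IH hab hα hlt)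
      (fun _ hα hlt => hC.binom_mem_of_unbalanced hhom (sum_eq_of_adeg_eq hhom hab ▸ IH) hab.symm
        hα hlt)

theorem binom_mem_of_unbalanced_of_sqFree (hhom : IsHomogeneousConfig v)
    (hnorm : IsNormalConfig v) {a b : Fin q → ℕ} {α : Fin q → ℤ}
    (IH : BinomMemBelow K v (∑ i, a i)) (hab : adeg v a = adeg v b)
    (hα : IsConformalCircuit v α a b)
    (hlt : Finset.univ.sup (posExp α) < Finset.univ.sup (negExp α))
    (hsf : (∀ i, a i ≤ 1) → binom K a b ∈ sqFreeCircuitIdeal K v) :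
    binom K a b ∈ sqFreeCircuitIdeal K v := by
  obtain ⟨d, k, hd, hdk, hαk⟩ := hα.1.exists_connector hhom hnorm hlt.le
  set c : Fin q → ℕ := fun i => min 1 (posExp α i)
  have hca : c ≤ a := fun i => by
    simp only [c, posExp]
    rcases lt_or_ge 0 (α i) with h | h
    · have := hα.2.1 i h; omega
    · omega
  rcases (Finset.sum_le_sum fun i _ => hca i).lt_or_eq with hlt' | heq
  · exact binom_mem_of_move hhom IH hab hca hd.symm (IH c d hlt' hd.symm) hdk
      (by have := hα.2.2 k hαk; omega)
  · have hc : c = a := funext fun i =>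
      (Finset.sum_eq_sum_iff_of_le fun i _ => hca i).mp heq i (Finset.mem_univ i)
    exact hsf fun i => hc ▸ min_le_left _ _

theorem binom_mem_of_isCircuitVec_move (hhom : IsHomogeneousConfig v) (hnorm : IsNormalConfig v)
    {β : Fin q → ℤ} (hβ : IsCircuitVec v β) (e : Fin q → ℕ)
    (IH : BinomMemBelow K v (∑ i, (e + posExp β) i)) :
    binom K (e + posExp β) (e + negExp β) ∈ sqFreeCircuitIdeal K v := by
  have hab : adeg v (e + posExp β) = adeg v (e + negExp β) := by
    rw [adeg_add, adeg_add, adeg_posExp_eq_negExp hβ.2.1]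
  refine binom_mem_of_forall_unbalanced hhom hnorm IH hab
    (fun _ hα hlt => binom_mem_of_unbalanced_of_sqFree hhom hnorm IH hab hα hlt fun hsf => ?_)
    (fun _ hα hlt => binom_mem_of_unbalanced_of_sqFree hhom hnorm
      (sum_eq_of_adeg_eq hhom hab ▸ IH) hab.symm hα hlt fun hsf => ?_)
  · exact binom_add_mem
      (binom_mem_sqFreeCircuitIdeal hβ (.inl fun i => le_add_self.trans (hsf i))) e
  · rw [binom_swap]
    exact neg_mem <| binom_add_mem
      (binom_mem_sqFreeCircuitIdeal hβ (.inr fun i => le_add_self.trans (hsf i))) e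

theorem toricIdeal_le_of_le_circuitIdeal (hhom : IsHomogeneousConfig v) (hnorm : IsNormalConfig v)
    (hC : toricIdeal K v ≤ Ideal.span {g | IsCircuitPoly K v g}) :
    toricIdeal K v ≤ sqFreeCircuitIdeal K v := by
  refine toricIdeal_le_of_forall_binomMemBelow fun a b IH hab => ?_
  set J := sqFreeCircuitIdeal K v
  -- `a` and `b` are joined by circuit moves, and those at the A-degree of `a` lie in `J`
  let s : Setoid (Fin q → ℕ) :=
    { r := fun x y => adeg v x = adeg v y ∧ (adeg v x = adeg v a → binom K x y ∈ J)
      iseqv :=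
        { refl := fun x => ⟨rfl, fun _ => by rw [binom_self]; exact zero_mem _⟩
          symm := fun {x y} ⟨hxy, h⟩ => ⟨hxy.symm, fun hy => by
            rw [binom_swap]; exact neg_mem (h (hxy.trans hy))⟩
          trans := fun {x y z} ⟨hxy, h⟩ ⟨hyz, h'⟩ => ⟨hxy.trans hyz, fun hx => by
            rw [← binom_add_binom _ y]; exact add_mem (h hx) (h' (hxy.symm.trans hx))⟩ } }
  refine (rel_of_binom_mem_span s ?_ (hC (Ideal.subset_span ⟨a, b, hab, rfl⟩))).2 rfl
  rintro _ ⟨β, hβ, rfl⟩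
  refine ⟨posExp β, negExp β, rfl, fun e => ⟨?_, fun he =>
    binom_mem_of_isCircuitVec_move hhom hnorm hβ e (sum_eq_of_adeg_eq hhom he ▸ IH)⟩⟩
  rw [adeg_add, adeg_add, adeg_posExp_eq_negExp hβ.2.1]

theorem sqFreeCircuitIdeal_le_toricIdeal : sqFreeCircuitIdeal K v ≤ toricIdeal K v :=
  Ideal.span_le.mpr fun _ ⟨_, hα, hf, _⟩ =>
    hf ▸ Ideal.subset_span ⟨_, _, adeg_posExp_eq_negExp hα.2.1, rfl⟩

theorem connectorCondition_of_toricIdeal_le (hhom : IsHomogeneousConfig v)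
    (hnorm : IsNormalConfig v) (h : toricIdeal K v ≤ sqFreeCircuitIdeal K v) :
    ConnectorCondition K v := by
  intro α hα hlt
  obtain ⟨d, k, hd, hdk, hαk⟩ := hα.exists_connector hhom hnorm hlt.le
  have hmem : binom K (fun i => min 1 (posExp α i)) d ∈ toricIdeal K v :=
    Ideal.subset_span ⟨_, _, hd.symm, rfl⟩
  exact ⟨_, ⟨_, d, rfl, hmem, fun i => min_le_left _ _, fun i hi => by omega, k, hdk,
    by simp only [negExp]; omega⟩, h hmem⟩

theorem genBySqFreeCircuits_of_eq (h : sqFreeCircuitIdeal K v = toricIdeal K v) :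
    GenBySqFreeCircuits K v := by
  obtain ⟨S, hS, hspan⟩ := (Submodule.fg_span_iff_fg_span_finset_subset _).mp
    (IsNoetherian.noetherian (sqFreeCircuitIdeal K v))
  exact ⟨S, fun f hf => hS hf, hspan.symm.trans h⟩

end Descent

theorem toricIdeal_tfae_circuits_general (K : Type*) [Field K] {n q : ℕ}
    (v : Fin q → Fin n → ℤ)
    (hhom : IsHomogeneousConfig v) (hnorm : IsNormalConfig v) :
    List.TFAE [GenByCircuits K v, GenBySqFreeCircuits K v, ConnectorCondition K v] := by
  tfae_have 2 → 1 := fun ⟨S, hS, hspan⟩ =>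
    ⟨S, fun f hf => (hS f hf).imp fun _ h => ⟨h.1, h.2.1⟩, hspan⟩
  tfae_have 1 → 3 := fun ⟨S, hS, hspan⟩ => connectorCondition_of_toricIdeal_le hhom hnorm
    (toricIdeal_le_of_le_circuitIdeal hhom hnorm (hspan ▸ Ideal.span_mono hS))
  tfae_have 3 → 2 := fun hC => genBySqFreeCircuits_of_eq <|
    sqFreeCircuitIdeal_le_toricIdeal.antisymm (toricIdeal_le_of_connectorCondition hhom hnorm hC)
  tfae_finish

/-- **Theorem (Martínez-Bernal–Villarreal).** For a homogeneous normal configuration,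
(a) `I_A` generated by a finite set of circuits, (b) generated by a finite set of
circuits with a square-free term, and (c) every unbalanced circuit has a connector
which is a `K[T]`-linear combination of circuits with a square-free term, are equivalent. -/
theorem toricIdeal_tfae_circuits (K : Type*) [Field K] {n q : ℕ}
    (hn : 0 < n) (hq : 0 < q) (v : Fin q → Fin n → ℤ)
    (hhom : IsHomogeneousConfig v) (hnorm : IsNormalConfig v) :
    List.TFAE [GenByCircuits K v, GenBySqFreeCircuits K v, ConnectorCondition K v] :=
  toricIdeal_tfae_circuits_general K v hhom hnorm
end

section
/- Let A = (v_1, …, v_q) ⊂ ℤ^n be a homogeneous normal configuration. If the toric ideal I_A is generated by a finite set of circuits of I_A each having a square-free term, then every unbalanced circuit of I_A has a connector which is a K[T_1, …, T_q]-linear combination of circuits of I_A having a square-free term. -/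
open MvPolynomial

/-!
Let `T^a - T^b` be an unbalanced circuit with `max a < max b = b_j`, and let `c = min(a, 1)` be
the exponent of the square-free part of `T^a`. From `∑ a_i v_i = ∑ b_i v_i`,
`∑ c_i v_i - v_j = ∑ (c_i - a_i / b_j + b_i / b_j - δ_ij) v_i`, and these coefficients are
nonnegative because every `a_i ≤ b_j`. Normality turns this point of `ℤA ∩ ℝ₊A` into a point
`∑ d'_i v_i` of `ℕA`, so `T^c - T^d` with `d = d' + δ_j` is a connector lying in `I_A`, and `I_A`
is generated by circuits with a square-free term.
-/

section Cone

variable {ι σ : Type*} [Fintype ι] (v : ι → σ → ℤ)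

def InRealCone (x : σ → ℤ) : Prop :=
  ∃ c : ι → ℝ, (∀ i, 0 ≤ c i) ∧ ∀ l, (x l : ℝ) = ∑ i, c i * (v i l : ℝ)

lemma sum_nsmul_apply_cast (a : ι → ℕ) (l : σ) :
    (((∑ i, a i • v i) l : ℤ) : ℝ) = ∑ i, (a i : ℝ) * (v i l : ℝ) := by
  simp [Finset.sum_apply]

lemma inRealCone_sum_min_one_smul_sub {a b : ι → ℕ}
    (hab : ∑ i, a i • v i = ∑ i, b i • v i) {j : ι} (hbj : 0 < b j) (hle : ∀ i, a i ≤ b j) :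
    InRealCone v (∑ i, min (a i) 1 • v i - v j) := by
  classical
  set B : ℝ := (b j : ℝ)
  have hB : 0 < B := by positivity
  refine ⟨fun i => (min (a i) 1 : ℕ) - a i / B + b i / B - if i = j then 1 else 0,
    fun i => ?_, fun l => ?_⟩
  · have ha : (a i : ℝ) / B ≤ (min (a i) 1 : ℕ) := by
      rcases Nat.eq_zero_or_pos (a i) with h | h
      · simp [h]
      · rw [min_eq_right h, Nat.cast_one, div_le_one hB]
        exact Nat.cast_le.mpr (hle i)
    have hb : (if i = j then 1 else 0 : ℝ) ≤ b i / B := by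
      split_ifs with h
      · rw [h, div_self hB.ne']
      · positivity
    linarith
  · have habl : ∑ i, (a i : ℝ) * v i l = ∑ i, (b i : ℝ) * v i l := by
      rw [← sum_nsmul_apply_cast, ← sum_nsmul_apply_cast, hab]
    simp only [Pi.sub_apply, Int.cast_sub, sum_nsmul_apply_cast, sub_mul, add_mul,
      Finset.sum_sub_distrib, Finset.sum_add_distrib, div_mul_eq_mul_div, ← Finset.sum_div, habl]
    simp

end Cone

section Normal

variable {n q : ℕ} {v : Fin q → Fin n → ℤ}

lemma IsNormalConfig.exists_sum_nsmul_eq (hnorm : IsNormalConfig v) {x : Fin n → ℤ}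
    (hZ : x ∈ AddSubgroup.closure (Set.range v)) (hR : InRealCone v x) :
    ∃ d : Fin q → ℕ, x = ∑ i, d i • v i :=
  AddSubmonoid.exists_of_mem_closure_range v x ((hnorm x).mpr ⟨hZ, hR⟩)

lemma IsNormalConfig.exists_sum_min_one_smul_eq (hnorm : IsNormalConfig v) {a b : Fin q → ℕ}
    (hab : ∑ i, a i • v i = ∑ i, b i • v i) {j : Fin q} (hbj : 0 < b j)
    (hle : ∀ i, a i ≤ b j) :
    ∃ d : Fin q → ℕ, ∑ i, min (a i) 1 • v i = ∑ i, d i • v i ∧ 0 < d j := by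
  have hmem : ∀ i, v i ∈ AddSubgroup.closure (Set.range v) :=
    fun i => AddSubgroup.subset_closure ⟨i, rfl⟩
  have hZ : ∑ i, min (a i) 1 • v i - v j ∈ AddSubgroup.closure (Set.range v) :=
    sub_mem (sum_mem fun i _ => nsmul_mem (hmem i) _) (hmem j)
  obtain ⟨d, hd⟩ :=
    hnorm.exists_sum_nsmul_eq hZ (inRealCone_sum_min_one_smul_sub v hab hbj hle)
  refine ⟨d + Pi.single j 1, ?_, by simp⟩
  simp only [Pi.add_apply, add_smul, Finset.sum_add_distrib, ← hd, Pi.single_apply, ite_smul,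
    one_smul, zero_smul, Finset.sum_ite_eq', Finset.mem_univ, if_true, sub_add_cancel]

end Normal

section Toric

variable (K : Type*) [Field K] {n q : ℕ} (v : Fin q → Fin n → ℤ)

lemma binom_mem_toricIdeal {a b : Fin q → ℕ} (hab : ∑ i, a i • v i = ∑ i, b i • v i) :
    binom K a b ∈ toricIdeal K v :=
  Ideal.subset_span ⟨a, b, hab, rfl⟩

lemma sum_posExp_smul_eq_sum_negExp_smul {α : Fin q → ℤ} (hα : ∑ i, α i • v i = 0) :
    ∑ i, posExp α i • v i = ∑ i, negExp α i • v i := by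
  rw [← sub_eq_zero, ← hα, ← Finset.sum_sub_distrib]
  refine Finset.sum_congr rfl fun i _ => ?_
  have h : ((posExp α i : ℕ) : ℤ) - (negExp α i : ℕ) = α i := by
    simp only [posExp, negExp]; omega
  rw [← natCast_zsmul, ← natCast_zsmul, ← sub_smul, h]

lemma GenBySqFreeCircuits.toricIdeal_le (h : GenBySqFreeCircuits K v) :
    toricIdeal K v ≤ Ideal.span {g | IsSqFreeCircuitPoly K v g} := by
  obtain ⟨S, hS, hspan⟩ := h
  exact hspan ▸ Ideal.span_mono hS

end Toric

theorem genBySqFreeCircuits_imp_connectorCondition_general (K : Type*) [Field K] {n q : ℕ}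
    (v : Fin q → Fin n → ℤ)
    (hnorm : IsNormalConfig v)
    (h : GenBySqFreeCircuits K v) : ConnectorCondition K v := by
  intro α hα hub
  have hne : (Finset.univ : Finset (Fin q)).Nonempty := by
    by_contra hempty
    simp [Finset.not_nonempty_iff_eq_empty.mp hempty] at hub
  obtain ⟨j, -, hj⟩ := Finset.exists_mem_eq_sup _ hne (negExp α)
  rw [hj] at hub
  have hle : ∀ i, posExp α i ≤ negExp α j :=
    fun i => (Finset.le_sup (Finset.mem_univ i)).trans hub.le
  have hbj : 0 < negExp α j := (Nat.zero_le _).trans_lt hub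
  obtain ⟨d, hcd, hdj⟩ :=
    hnorm.exists_sum_min_one_smul_eq (sum_posExp_smul_eq_sum_negExp_smul v hα.2.1) hbj hle
  have hmem := binom_mem_toricIdeal K v hcd
  refine ⟨_, ⟨_, d, rfl, hmem, fun i => min_le_right _ _, fun i hi h0 => hi (by simp [h0]),
    j, hdj.ne', hbj.ne'⟩, h.toricIdeal_le K v hmem⟩

/-- If the toric ideal of a homogeneous normal configuration is generated by a finite set
of circuits with a square-free term, then every unbalanced circuit has a connector which is
a `K[T]`-linear combination of circuits with a square-free term. -/
theorem genBySqFreeCircuits_imp_connectorCondition (K : Type*) [Field K] {n q : ℕ}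
    (hn : 0 < n) (hq : 0 < q) (v : Fin q → Fin n → ℤ)
    (hhom : IsHomogeneousConfig v) (hnorm : IsNormalConfig v)
    (h : GenBySqFreeCircuits K v) : ConnectorCondition K v :=
  genBySqFreeCircuits_imp_connectorCondition_general K v hnorm h
end

section
/- Let G be a multigraph, A the configuration of characteristic vectors of its edges, and I_A the toric ideal of the edge subring K[G]. If f = T^a − T^b is a circuit of I_A, then f has a square-free term, or f has non-square-free terms and max_i a_i = max_i b_i = 2. -/
open MvPolynomial

/-!
Let `α` be a circuit and call the edges with `α k ≠ 0` the support. At every vertex the values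
of `α` on the incident edge-ends sum to zero, so no vertex has degree `1`, and at a vertex of
degree `2` the two edges carry opposite values. Since the kernel restricted to the support is a
line, the support has at most one edge more than it has vertices, so the degrees exceed `2` by
at most `2` in total: the junctions (vertices of degree `≥ 3`) are none, one of degree `4`, or two
of degree `3`.

Group the support into levels according to the value of `|α|`. Multiplying `α` by a function
of `|α|` keeps every vertex equation away from the junctions, so by minimality the junction
equations of the levels admit only constant solutions. Every level has an even number of
ends at the junctions, at least two when there are several levels, and counting these ends
leaves at most two levels, whose values differ by a factor `2`. As `gcd α = 1`, `|α k| ≤ 2`.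
-/

open Finset

namespace IsCircuitVec

variable {n q : ℕ} {v : Fin q → Fin n → ℤ} {α : Fin q → ℤ}

theorem exists_ne_zero (hα : IsCircuitVec v α) : ∃ k, α k ≠ 0 := by
  by_contra! h
  exact hα.1 (funext h)

theorem sum_mul_eq_zero (hα : IsCircuitVec v α) (l : Fin n) : ∑ k, α k * v k l = 0 := by
  simpa using congrFun hα.2.1 l

theorem eq_zero_of_apply_eq_zero (hα : IsCircuitVec v α) {β : Fin q → ℚ}
    (hβ : ∀ l, ∑ k, β k * v k l = 0) (hsupp : ∀ k, α k = 0 → β k = 0)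
    {k₀ : Fin q} (hk₀ : α k₀ ≠ 0) (hβk₀ : β k₀ = 0) : β = 0 := by
  by_contra hne
  have hsame := hα.2.2.1 β (funext fun l => by simpa using hβ l) hne
    fun k hk h => hk (hsupp k h)
  exact (Set.ext_iff.1 hsame k₀).2 hk₀ hβk₀

theorem eq_of_sum_mul_mul_eq_zero (hα : IsCircuitVec v α) {t : Fin q → ℚ}
    (ht : ∀ l, ∑ k, t k * α k * v k l = 0) {k k' : Fin q} (hk : α k ≠ 0) (hk' : α k' ≠ 0) :
    t k = t k' := by
  have h := hα.eq_zero_of_apply_eq_zero (β := fun j => (t j - t k') * α j)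
    (fun l => by
      have h0 : ∑ j, (α j : ℚ) * v j l = 0 := by exact_mod_cast hα.sum_mul_eq_zero l
      simp_rw [sub_mul, Finset.sum_sub_distrib, ht l, mul_assoc, ← Finset.mul_sum, h0]
      ring)
    (fun j hj => by simp [hj]) hk' (by simp)
  have := congrFun h k
  simp only [Pi.zero_apply, mul_eq_zero, Int.cast_eq_zero, sub_eq_zero] at this
  exact this.resolve_right hk

theorem card_support_le (hα : IsCircuitVec v α) (T : Finset (Fin n))
    (hT : ∀ k l, α k ≠ 0 → l ∉ T → v k l = 0) : #{k | α k ≠ 0} ≤ #T + 1 := by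
  set S : Finset (Fin q) := {k | α k ≠ 0}
  obtain ⟨k₀, hk₀⟩ := hα.exists_ne_zero
  have hk₀S : k₀ ∈ S := by simpa [S] using hk₀
  let φ : (S → ℚ) →ₗ[ℚ] (T → ℚ) × ℚ :=
    (LinearMap.pi fun l : T => ∑ k : S, (v k l : ℚ) • LinearMap.proj k).prod
      (LinearMap.proj ⟨k₀, hk₀S⟩)
  -- an element of the kernel of `φ` is a kernel vector supported in `S` vanishing at `k₀`
  have hφ : Function.Injective φ := by
    rw [← LinearMap.ker_eq_bot, LinearMap.ker_eq_bot']
    intro f hf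
    have hT' : ∀ l : T, ∑ k : S, (v k l : ℚ) * f k = 0 := fun l => by
      simpa [φ] using congrFun (congrArg Prod.fst hf) l
    have hk₀' : f ⟨k₀, hk₀S⟩ = 0 := by simpa [φ] using congrArg Prod.snd hf
    set β : Fin q → ℚ := fun k => if h : k ∈ S then f ⟨k, h⟩ else 0
    have hβ : β = 0 := by
      refine hα.eq_zero_of_apply_eq_zero (fun l => ?_) (fun k hk => by simp [β, S, hk]) hk₀
        (by simpa [β, hk₀S] using hk₀')
      rw [← Finset.sum_subset (Finset.subset_univ S) (fun k _ hk => by simp [β, hk]),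
        ← Finset.sum_coe_sort]
      by_cases hl : l ∈ T
      · simpa [β, mul_comm] using hT' ⟨l, hl⟩
      · exact Finset.sum_eq_zero fun k _ => by
          simp [hT k l (Finset.mem_filter.1 k.2).2 hl]
    funext k
    simpa [β] using congrFun hβ k
  simpa using LinearMap.finrank_le_finrank_of_injective hφ

end IsCircuitVec

def supportFinset {q : ℕ} (α : Fin q → ℤ) : Finset (Fin q) := {k | α k ≠ 0}

@[simp]
lemma mem_supportFinset {q : ℕ} {α : Fin q → ℤ} {k : Fin q} : k ∈ supportFinset α ↔ α k ≠ 0 := by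
  simp [supportFinset]

def absValues {q : ℕ} (α : Fin q → ℤ) : Finset ℤ := (supportFinset α).image fun k => |α k|

lemma pos_of_mem_absValues {q : ℕ} {α : Fin q → ℤ} {x : ℤ} (hx : x ∈ absValues α) : 0 < x := by
  obtain ⟨k, hk, rfl⟩ := Finset.mem_image.1 hx
  exact abs_pos.2 (mem_supportFinset.1 hk)

structure FinMultigraph (n q : ℕ) where
  fst : Fin q → Fin n
  snd : Fin q → Fin n

namespace FinMultigraph

variable {n q : ℕ} (G : FinMultigraph n q)

def inc (k : Fin q) (l : Fin n) : ℕ :=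
  (if G.fst k = l then 1 else 0) + (if G.snd k = l then 1 else 0)

def config : Fin q → Fin n → ℤ := fun k l => G.inc k l

lemma sum_inc (k : Fin q) : ∑ l, G.inc k l = 2 := by
  simp [inc, Finset.sum_add_distrib]

def endsAt (F : Finset (Fin q)) (l : Fin n) : Multiset (Fin q) :=
  {k ∈ F | G.fst k = l}.val + {k ∈ F | G.snd k = l}.val

lemma sum_map_endsAt {M : Type*} [AddCommMonoid M] (F : Finset (Fin q)) (l : Fin n)
    (f : Fin q → M) : ((G.endsAt F l).map f).sum = ∑ k ∈ F, G.inc k l • f k := by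
  rw [endsAt, Multiset.map_add, Multiset.sum_add, Finset.sum_map_val, Finset.sum_map_val]
  simp [inc, Finset.sum_filter, add_smul, ite_smul, Finset.sum_add_distrib]

lemma card_endsAt (F : Finset (Fin q)) (l : Fin n) :
    (G.endsAt F l).card = ∑ k ∈ F, G.inc k l := by
  simpa using G.sum_map_endsAt F l fun _ => (1 : ℕ)

lemma sum_card_endsAt (F : Finset (Fin q)) : ∑ l, (G.endsAt F l).card = 2 * #F := by
  simp_rw [card_endsAt]
  rw [Finset.sum_comm]
  simp [sum_inc, mul_comm]

lemma filter_endsAt (F : Finset (Fin q)) (p : Fin q → Prop) [DecidablePred p] (l : Fin n) :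
    (G.endsAt F l).filter p = G.endsAt {k ∈ F | p k} l := by
  simp [endsAt, Multiset.filter_add, Finset.filter_filter]

lemma mem_of_mem_endsAt {F : Finset (Fin q)} {l : Fin n} {k : Fin q} (hk : k ∈ G.endsAt F l) :
    k ∈ F := by
  simp only [endsAt, Multiset.mem_add, Finset.mem_val, Finset.mem_filter] at hk
  tauto

lemma sum_mul_inc {R : Type*} [CommRing R] {F : Finset (Fin q)} {β : Fin q → R}
    (hβ : ∀ k ∉ F, β k = 0) (l : Fin n) :
    ∑ k, β k * G.inc k l = ((G.endsAt F l).map β).sum := by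
  rw [sum_map_endsAt, ← Finset.sum_subset (Finset.subset_univ F) fun k _ hk => by simp [hβ k hk]]
  simp [mul_comm]

variable (α : Fin q → ℤ)

def degree (l : Fin n) : ℕ := (G.endsAt (supportFinset α) l).card

def junctions : Finset (Fin n) := {l | 3 ≤ G.degree α l}

def level (x : ℤ) : Finset (Fin q) := {k ∈ supportFinset α | |α k| = x}

def levelDegree (x : ℤ) (l : Fin n) : ℕ := (G.endsAt (level α x) l).card

def levelLoad (x : ℤ) (l : Fin n) : ℤ := ((G.endsAt (level α x) l).map α).sum

lemma sum_absValues_sum_map_endsAt {M : Type*} [AddCommMonoid M] (f : Fin q → M) (l : Fin n) :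
    ∑ x ∈ absValues α, ((G.endsAt (level α x) l).map f).sum =
      ((G.endsAt (supportFinset α) l).map f).sum := by
  simp_rw [sum_map_endsAt, level]
  exact Finset.sum_fiberwise_of_maps_to (fun k hk => Finset.mem_image_of_mem _ hk) _

lemma sum_levelDegree (l : Fin n) : ∑ x ∈ absValues α, G.levelDegree α x l = G.degree α l := by
  simpa [levelDegree, degree] using G.sum_absValues_sum_map_endsAt α (fun _ => (1 : ℕ)) l

def IsBalanced : Prop := ∀ l, ((G.endsAt (supportFinset α) l).map α).sum = 0

variable {G α} {l : Fin n} {x y : ℤ}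

lemma abs_eq_of_mem_endsAt_level {k : Fin q} (hk : k ∈ G.endsAt (level α x) l) : |α k| = x :=
  (Finset.mem_filter.1 (G.mem_of_mem_endsAt hk)).2

lemma levelLoad_eq_zero_of_levelDegree_eq_zero (h : G.levelDegree α x l = 0) :
    G.levelLoad α x l = 0 := by
  rw [levelDegree, Multiset.card_eq_zero] at h
  simp [levelLoad, h]

lemma levelLoad_eq_of_levelDegree_eq_one (h : G.levelDegree α x l = 1) :
    G.levelLoad α x l = x ∨ G.levelLoad α x l = -x := by
  obtain ⟨k, hk⟩ := Multiset.card_eq_one.1 h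
  have hx := abs_eq_of_mem_endsAt_level (hk ▸ Multiset.mem_singleton_self k)
  simpa [levelLoad, hk] using eq_or_eq_neg_of_abs_eq hx

lemma levelLoad_eq_of_levelDegree_eq_two (h : G.levelDegree α x l = 2) :
    G.levelLoad α x l = 0 ∨ G.levelLoad α x l = 2 * x ∨ G.levelLoad α x l = -(2 * x) := by
  obtain ⟨k, k', hk⟩ := Multiset.card_eq_two.1 h
  have h₁ := eq_or_eq_neg_of_abs_eq <| abs_eq_of_mem_endsAt_level (G := G) (α := α) (x := x)
    (l := l) (k := k) (by simp [hk])
  have h₂ := eq_or_eq_neg_of_abs_eq <| abs_eq_of_mem_endsAt_level (G := G) (α := α) (x := x)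
    (l := l) (k := k') (by simp [hk])
  simp only [levelLoad, hk, Multiset.insert_eq_cons, Multiset.map_cons, Multiset.sum_cons,
    Multiset.map_singleton, Multiset.sum_singleton]
  omega

theorem _root_.IsCircuitVec.isBalanced (hα : IsCircuitVec G.config α) : G.IsBalanced α :=
  fun l => by
    rw [← G.sum_mul_inc (F := supportFinset α) (fun k hk => by simpa using hk)]
    exact hα.sum_mul_eq_zero l

namespace IsBalanced

theorem degree_ne_one (hα : G.IsBalanced α) (l : Fin n) : G.degree α l ≠ 1 := by
  intro h
  obtain ⟨k, hk⟩ := Multiset.card_eq_one.1 h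
  have hsum := hα l
  rw [hk] at hsum
  exact mem_supportFinset.1 (G.mem_of_mem_endsAt (hk ▸ Multiset.mem_singleton_self k))
    (by simpa using hsum)

/-- Away from the junctions a vertex has degree `0` or `2`, and in the latter case the two
ends carry opposite values of `α`, hence lie on the same level and cancel. -/
theorem even_levelDegree_and_levelLoad_eq_zero (hα : G.IsBalanced α)
    (hl : l ∉ G.junctions α) (x : ℤ) :
    Even (G.levelDegree α x l) ∧ G.levelLoad α x l = 0 := by
  have hdeg : G.degree α l = 0 ∨ G.degree α l = 2 := by
    have := hα.degree_ne_one l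
    simp only [junctions, Finset.mem_filter, Finset.mem_univ, true_and, not_le] at hl
    omega
  simp only [levelDegree, levelLoad, level, ← filter_endsAt]
  rcases hdeg with h | h
  · rw [degree, Multiset.card_eq_zero] at h
    simp [h]
  · obtain ⟨k, k', hk⟩ := Multiset.card_eq_two.1 h
    have hsum := hα l
    simp only [hk, Multiset.insert_eq_cons, Multiset.map_cons, Multiset.sum_cons,
      Multiset.map_singleton, Multiset.sum_singleton] at hsum ⊢
    have hk' : α k' = -α k := by omega
    by_cases hx : |α k| = x <;> simp [Multiset.filter_singleton, hx, hk']

theorem even_sum_levelDegree (hα : G.IsBalanced α) (x : ℤ) :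
    Even (∑ l ∈ G.junctions α, G.levelDegree α x l) := by
  have htotal : Even (∑ l, G.levelDegree α x l) :=
    ⟨#(level α x), by simp [levelDegree, sum_card_endsAt, two_mul]⟩
  rw [← Finset.sum_add_sum_compl (G.junctions α)] at htotal
  refine (Nat.even_add.1 htotal).2 (Finset.even_sum _ fun l hl => ?_)
  exact (hα.even_levelDegree_and_levelLoad_eq_zero (Finset.mem_compl.1 hl) x).1

theorem sum_levelLoad (hα : G.IsBalanced α) (l : Fin n) :
    ∑ x ∈ absValues α, G.levelLoad α x l = 0 :=
  (G.sum_absValues_sum_map_endsAt α α l).trans (hα l)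

theorem eq_two_mul_or_of_degree_eq_three (hα : G.IsBalanced α)
    (hl : G.degree α l = 3) (hV : absValues α = {x, y}) (hxy : x ≠ y)
    (hload : G.levelLoad α x l ≠ 0) : x = 2 * y ∨ y = 2 * x := by
  have hx := pos_of_mem_absValues (α := α) (x := x) (by simp [hV])
  have hy := pos_of_mem_absValues (α := α) (x := y) (by simp [hV])
  have hdeg := G.sum_levelDegree α l
  rw [hV, Finset.sum_pair hxy, hl] at hdeg
  have hsum := hα.sum_levelLoad l
  rw [hV, Finset.sum_pair hxy] at hsum
  have hx0 : G.levelDegree α x l ≠ 0 := fun h => hload (levelLoad_eq_zero_of_levelDegree_eq_zero h)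
  have hy0 : G.levelDegree α y l ≠ 0 := fun h => by
    have := levelLoad_eq_zero_of_levelDegree_eq_zero h
    omega
  rcases (by omega : G.levelDegree α x l = 1 ∧ G.levelDegree α y l = 2 ∨
      G.levelDegree α x l = 2 ∧ G.levelDegree α y l = 1) with ⟨h₁, h₂⟩ | ⟨h₂, h₁⟩
  · have := levelLoad_eq_of_levelDegree_eq_one h₁
    have := levelLoad_eq_of_levelDegree_eq_two h₂
    omega
  · have := levelLoad_eq_of_levelDegree_eq_one h₁
    have := levelLoad_eq_of_levelDegree_eq_two h₂
    omega

end IsBalanced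

end FinMultigraph

namespace IsCircuitVec

open FinMultigraph

variable {n q : ℕ} {G : FinMultigraph n q} {α : Fin q → ℤ} {x y : ℤ}

/-- By the rank bound the degrees exceed `2` by at most `2` in total. -/
theorem junctions_cases (hα : IsCircuitVec G.config α) :
    G.junctions α = ∅ ∨ (∃ u, G.junctions α = {u} ∧ G.degree α u = 4) ∨
      ∃ u w, u ≠ w ∧ G.junctions α = {u, w} ∧ G.degree α u = 3 ∧ G.degree α w = 3 := by
  have hrank := hα.card_support_le {l | G.degree α l ≠ 0} fun k l hk hl => by
    simp only [Finset.mem_filter, Finset.mem_univ, true_and, not_not, degree,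
      card_endsAt, Finset.sum_eq_zero_iff, mem_supportFinset] at hl
    simp [config, hl k hk]
  have hsplit : ∑ l, G.degree α l =
      ∑ l ∈ G.junctions α, (G.degree α l - 2) + 2 * #{l | G.degree α l ≠ 0} := by
    rw [junctions, Finset.sum_filter, Finset.card_filter, Finset.mul_sum,
      ← Finset.sum_add_distrib]
    refine Finset.sum_congr rfl fun l _ => ?_
    have := hα.isBalanced.degree_ne_one l
    split_ifs <;> omega
  have htotal : ∑ l, G.degree α l = 2 * #(supportFinset α) := G.sum_card_endsAt _
  have hexcess : ∑ l ∈ G.junctions α, (G.degree α l - 2) = 0 ∨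
      ∑ l ∈ G.junctions α, (G.degree α l - 2) = 2 := by
    rw [supportFinset] at htotal
    omega
  have hge : ∀ l ∈ G.junctions α, 3 ≤ G.degree α l := fun l hl => by simpa [junctions] using hl
  have hcard : #(G.junctions α) ≤ ∑ l ∈ G.junctions α, (G.degree α l - 2) := by
    simpa using Finset.card_nsmul_le_sum (G.junctions α) (fun l => G.degree α l - 2) 1
      fun l hl => by have := hge l hl; omega
  rcases (by omega : #(G.junctions α) = 0 ∨ #(G.junctions α) = 1 ∨ #(G.junctions α) = 2)
    with h | h | h
  · exact Or.inl (Finset.card_eq_zero.1 h)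
  · obtain ⟨u, hu⟩ := Finset.card_eq_one.1 h
    have := hge u (by simp [hu])
    simp only [hu, Finset.sum_singleton] at hexcess
    exact Or.inr (Or.inl ⟨u, hu, by omega⟩)
  · obtain ⟨u, w, huw, huw'⟩ := Finset.card_eq_two.1 h
    have := hge u (by simp [huw'])
    have := hge w (by simp [huw'])
    simp only [huw', Finset.sum_pair huw] at hexcess
    exact Or.inr (Or.inr ⟨u, w, huw, huw', by omega, by omega⟩)

/-- Scaling `α` by a function `g` of `|α|` gives a kernel vector as soon as the junction
equations hold, so minimality forces `g` to be constant on the values of `|α|`. -/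
theorem eq_of_sum_mul_levelLoad_eq_zero (hα : IsCircuitVec G.config α) (g : ℤ → ℚ)
    (hg : ∀ l ∈ G.junctions α, ∑ x ∈ absValues α, g x * G.levelLoad α x l = 0)
    (hx : x ∈ absValues α) (hy : y ∈ absValues α) : g x = g y := by
  obtain ⟨k, hk, rfl⟩ := Finset.mem_image.1 hx
  obtain ⟨k', hk', rfl⟩ := Finset.mem_image.1 hy
  refine hα.eq_of_sum_mul_mul_eq_zero (t := fun j => g |α j|) (fun l => ?_)
    (mem_supportFinset.1 hk) (mem_supportFinset.1 hk')
  have hlevel : ∀ x, ((G.endsAt (level α x) l).map fun j => g |α j| * α j).sum =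
      g x * G.levelLoad α x l := fun x => by
    rw [Multiset.map_congr rfl fun j hj => by rw [abs_eq_of_mem_endsAt_level hj],
      Multiset.sum_map_mul_left, levelLoad, Int.cast_multiset_sum, Multiset.map_map]
    rfl
  have hβ : ∀ j ∉ supportFinset α, g |α j| * (α j : ℚ) = 0 := fun j hj => by
    simp [by simpa using hj]
  calc ∑ j, g |α j| * α j * (G.config j l : ℚ)
      = ∑ x ∈ absValues α, g x * G.levelLoad α x l := by
        simp only [config, Int.cast_natCast]
        rw [G.sum_mul_inc hβ, ← G.sum_absValues_sum_map_endsAt]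
        exact Finset.sum_congr rfl fun x _ => hlevel x
    _ = 0 := by
        by_cases hl : l ∈ G.junctions α
        · exact hg l hl
        · refine Finset.sum_eq_zero fun x _ => ?_
          simp [(hα.isBalanced.even_levelDegree_and_levelLoad_eq_zero hl x).2]

theorem exists_levelLoad_ne_zero (hα : IsCircuitVec G.config α) (hx : x ∈ absValues α)
    (hy : y ∈ absValues α) (hxy : x ≠ y) : ∃ l ∈ G.junctions α, G.levelLoad α x l ≠ 0 := by
  by_contra! h
  have := hα.eq_of_sum_mul_levelLoad_eq_zero (fun z => if z = x then 1 else 0)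
    (fun l hl => by simp [h l hl]) hx hy
  simp [hxy.symm] at this

theorem two_le_sum_levelDegree (hα : IsCircuitVec G.config α) (hV : 1 < #(absValues α))
    (hx : x ∈ absValues α) : 2 ≤ ∑ l ∈ G.junctions α, G.levelDegree α x l := by
  obtain ⟨y, hy, hyx⟩ := Finset.exists_mem_ne hV x
  obtain ⟨l, hl, hload⟩ := hα.exists_levelLoad_ne_zero hx hy hyx.symm
  have hpos : 1 ≤ G.levelDegree α x l := by
    by_contra! h0
    exact hload (levelLoad_eq_zero_of_levelDegree_eq_zero (by omega))
  have hle := Finset.single_le_sum (fun l _ => Nat.zero_le (G.levelDegree α x l)) hl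
  obtain ⟨r, hr⟩ := hα.isBalanced.even_sum_levelDegree x
  omega

/-- A relation between the junction loads of two levels gives a multiple of `α` by a function of
`|α|` that vanishes on a third level. -/
theorem eq_zero_of_mul_levelLoad_add_mul_levelLoad (hα : IsCircuitVec G.config α) {z : ℤ}
    (hx : x ∈ absValues α) (hy : y ∈ absValues α) (hz : z ∈ absValues α)
    (hxy : x ≠ y) (hzx : z ≠ x) (hzy : z ≠ y) {a b : ℚ}
    (h : ∀ l ∈ G.junctions α, a * G.levelLoad α x l + b * G.levelLoad α y l = 0) :
    a = 0 ∧ b = 0 := by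
  let g : ℤ → ℚ := fun t => a * (if t = x then 1 else 0) + b * (if t = y then 1 else 0)
  have hg : ∀ l ∈ G.junctions α, ∑ t ∈ absValues α, g t * G.levelLoad α t l = 0 := by
    intro l hl
    simp only [g, add_mul, mul_assoc, Finset.sum_add_distrib, ← Finset.mul_sum, ite_mul,
      one_mul, zero_mul, Finset.sum_ite_eq', hx, hy, if_true]
    exact h l hl
  have hgx := hα.eq_of_sum_mul_levelLoad_eq_zero g hg hx hz
  have hgy := hα.eq_of_sum_mul_levelLoad_eq_zero g hg hy hz
  simp only [g, hxy, hxy.symm, hzx, hzy, if_true, if_false] at hgx hgy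
  constructor <;> linarith

theorem card_absValues_le_one_of_junctions_eq_singleton (hα : IsCircuitVec G.config α)
    {u : Fin n} (hJ : G.junctions α = {u}) (hu : G.degree α u = 4) : #(absValues α) ≤ 1 := by
  by_contra! hV
  have h2 : ∀ z ∈ absValues α, 2 ≤ G.levelDegree α z u := fun z hz => by
    simpa [hJ] using hα.two_le_sum_levelDegree hV hz
  have hsum : ∑ z ∈ absValues α, G.levelDegree α z u = 4 := (G.sum_levelDegree α u).trans hu
  have hcard : 2 * #(absValues α) ≤ 4 := by
    simpa [hsum, mul_comm] using Finset.card_nsmul_le_sum _ (G.levelDegree α · u) 2 h2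
  obtain ⟨x, hx, y, hy, hxy⟩ := Finset.one_lt_card.1 hV
  have hV2 : absValues α = {x, y} := (Finset.eq_of_subset_of_card_le
    (by simp [Finset.insert_subset_iff, hx, hy]) (by rw [Finset.card_pair hxy]; omega)).symm
  rw [hV2, Finset.sum_pair hxy] at hsum
  have hloads := hα.isBalanced.sum_levelLoad u
  rw [hV2, Finset.sum_pair hxy] at hloads
  obtain ⟨l, hl, hload⟩ := hα.exists_levelLoad_ne_zero hx hy hxy
  rw [hJ, Finset.mem_singleton] at hl
  subst hl
  have := h2 x hx
  have := h2 y hy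
  have := levelLoad_eq_of_levelDegree_eq_two (by omega : G.levelDegree α x l = 2)
  have := levelLoad_eq_of_levelDegree_eq_two (by omega : G.levelDegree α y l = 2)
  have := pos_of_mem_absValues hx
  have := pos_of_mem_absValues hy
  omega

theorem levelLoad_mul_levelLoad_ne (hα : IsCircuitVec G.config α) {u w : Fin n} {z : ℤ}
    (hJ : G.junctions α = {u, w}) (hx : x ∈ absValues α) (hy : y ∈ absValues α)
    (hz : z ∈ absValues α) (hxy : x ≠ y) (hzx : z ≠ x) (hzy : z ≠ y)
    (hyu : G.levelLoad α y u ≠ 0) :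
    G.levelLoad α y u * G.levelLoad α x w ≠ G.levelLoad α x u * G.levelLoad α y w := by
  intro hpar
  have hcomb := hα.eq_zero_of_mul_levelLoad_add_mul_levelLoad hx hy hz hxy hzx hzy
    (a := G.levelLoad α y u) (b := -G.levelLoad α x u) fun l hl => by
      rw [hJ, Finset.mem_insert, Finset.mem_singleton] at hl
      rcases hl with rfl | rfl
      · ring
      · have := congrArg (Int.cast : ℤ → ℚ) hpar
        push_cast at this
        linarith
  exact hyu (by exact_mod_cast hcomb.1)

theorem exists_levelDegree_eq_two (hα : IsCircuitVec G.config α) {u w : Fin n}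
    (hJ : G.junctions α = {u, w}) (hu : G.degree α u = 3) (hV : #(absValues α) = 3)
    (h2 : ∀ z ∈ absValues α, G.levelDegree α z u + G.levelDegree α z w = 2) :
    ∃ p ∈ absValues α, G.levelDegree α p u = 2 := by
  by_contra! hne
  -- then every level has one end at each junction, so its loads there agree up to sign, and
  -- two of the three levels have the same sign pattern
  have h1 : ∀ z ∈ absValues α, G.levelDegree α z u = 1 := by
    refine (Finset.sum_eq_sum_iff_of_le fun z hz => ?_).1 ?_
    · have := h2 z hz
      have := hne z hz
      omega
    · rw [G.sum_levelDegree, hu]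
      simp [hV]
  have hsign : ∀ z ∈ absValues α, G.levelLoad α z w =
      (if G.levelLoad α z w = G.levelLoad α z u then 1 else -1) * G.levelLoad α z u := by
    intro z hz
    have := levelLoad_eq_of_levelDegree_eq_one (h1 z hz)
    have := levelLoad_eq_of_levelDegree_eq_one
      (by have := h1 z hz; have := h2 z hz; omega : G.levelDegree α z w = 1)
    split_ifs <;> omega
  obtain ⟨x, hx, y, hy, hxy, hsame⟩ := Finset.exists_ne_map_eq_of_card_lt_of_maps_to
    (s := absValues α) (t := (Finset.univ : Finset Bool)) (by simp [hV])
    (f := fun z => decide (G.levelLoad α z w = G.levelLoad α z u))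
    fun _ _ => Finset.mem_coe.2 (Finset.mem_univ _)
  have hpar : G.levelLoad α y u * G.levelLoad α x w = G.levelLoad α x u * G.levelLoad α y w := by
    have hε : (if G.levelLoad α x w = G.levelLoad α x u then (1 : ℤ) else -1) =
        if G.levelLoad α y w = G.levelLoad α y u then 1 else -1 := by
      simp only [decide_eq_decide] at hsame
      simp only [hsame]
    rw [hsign x hx, hsign y hy, hε]
    ring
  obtain ⟨z, hz, hzxy⟩ := Finset.exists_mem_notMem_of_card_lt_card (s := {x, y})
    (t := absValues α) (by rw [Finset.card_pair hxy, hV]; norm_num)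
  simp only [Finset.mem_insert, Finset.mem_singleton, not_or] at hzxy
  refine hα.levelLoad_mul_levelLoad_ne hJ hx hy hz hxy hzxy.1 hzxy.2 ?_ hpar
  have := levelLoad_eq_of_levelDegree_eq_one (h1 y hy)
  have := pos_of_mem_absValues hy
  omega

theorem eq_two_mul_of_levelDegree_eq_two (hα : IsCircuitVec G.config α) {u w : Fin n}
    {p r : ℤ} (hJ : G.junctions α = {u, w}) (hu : G.degree α u = 3)
    (hV : absValues α = {p, y, r}) (hpy : p ≠ y) (hpr : p ≠ r) (hyr : y ≠ r)
    (h2 : ∀ z ∈ absValues α, G.levelDegree α z u + G.levelDegree α z w = 2)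
    (hpu : G.levelDegree α p u = 2) (hrw : G.levelDegree α r w = 2) : y = 2 * p := by
  have hp : p ∈ absValues α := by simp [hV]
  have hy : y ∈ absValues α := by simp [hV]
  have hr : r ∈ absValues α := by simp [hV]
  have hnotin : p ∉ ({y, r} : Finset ℤ) := by simp [hpy, hpr]
  have hdeg := G.sum_levelDegree α u
  rw [hV, Finset.sum_insert hnotin, Finset.sum_pair hyr, hu] at hdeg
  have := h2 p hp
  have := h2 r hr
  have hpw : G.levelLoad α p w = 0 := levelLoad_eq_zero_of_levelDegree_eq_zero (by omega)
  have hpu0 : G.levelLoad α p u ≠ 0 := by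
    obtain ⟨l, hl, hl0⟩ := hα.exists_levelLoad_ne_zero hp hy hpy
    rw [hJ, Finset.mem_insert, Finset.mem_singleton] at hl
    rcases hl with rfl | rfl
    · exact hl0
    · exact absurd hpw hl0
  have hsum := hα.isBalanced.sum_levelLoad u
  rw [hV, Finset.sum_insert hnotin, Finset.sum_pair hyr] at hsum
  have := levelLoad_eq_of_levelDegree_eq_two hpu
  have := levelLoad_eq_of_levelDegree_eq_one (by omega : G.levelDegree α y u = 1)
  have := levelLoad_eq_zero_of_levelDegree_eq_zero (by omega : G.levelDegree α r u = 0)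
  have := pos_of_mem_absValues hp
  have := pos_of_mem_absValues hy
  omega

theorem card_absValues_eq_three_of_junctions_eq_pair (hα : IsCircuitVec G.config α)
    {u w : Fin n} (huw : u ≠ w) (hJ : G.junctions α = {u, w}) (hu : G.degree α u = 3)
    (hw : G.degree α w = 3) (hV : 2 < #(absValues α)) :
    #(absValues α) = 3 ∧
      ∀ z ∈ absValues α, G.levelDegree α z u + G.levelDegree α z w = 2 := by
  have hge : ∀ z ∈ absValues α, 2 ≤ G.levelDegree α z u + G.levelDegree α z w := fun z hz => by
    simpa [hJ, Finset.sum_pair huw] using hα.two_le_sum_levelDegree (by omega) hz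
  have htotal : ∑ z ∈ absValues α, (G.levelDegree α z u + G.levelDegree α z w) = 6 := by
    rw [Finset.sum_add_distrib, G.sum_levelDegree, G.sum_levelDegree, hu, hw]
  have hcard : 2 * #(absValues α) ≤ 6 := by
    simpa [htotal, mul_comm] using Finset.card_nsmul_le_sum _ _ 2 hge
  have hV3 : #(absValues α) = 3 := by omega
  have := (Finset.sum_eq_sum_iff_of_le hge).1 (by rw [htotal]; simp [hV3])
  exact ⟨hV3, fun z hz => (this z hz).symm⟩

theorem card_absValues_le_two_of_junctions_eq_pair (hα : IsCircuitVec G.config α)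
    {u w : Fin n} (huw : u ≠ w) (hJ : G.junctions α = {u, w}) (hu : G.degree α u = 3)
    (hw : G.degree α w = 3) : #(absValues α) ≤ 2 := by
  by_contra! hV
  obtain ⟨hV3, h2⟩ := hα.card_absValues_eq_three_of_junctions_eq_pair huw hJ hu hw hV
  -- the level with both junction ends at `u` and the one with both at `w` are each half of
  -- the third level
  have hJ' : G.junctions α = {w, u} := by rw [hJ, Finset.pair_comm]
  have h2' : ∀ z ∈ absValues α, G.levelDegree α z w + G.levelDegree α z u = 2 :=
    fun z hz => by rw [add_comm]; exact h2 z hz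
  obtain ⟨p, hp, hpu⟩ := hα.exists_levelDegree_eq_two hJ hu hV3 h2
  obtain ⟨r, hr, hrw⟩ := hα.exists_levelDegree_eq_two hJ' hw hV3 h2'
  have hpr : p ≠ r := by
    rintro rfl
    have := h2 p hp
    omega
  obtain ⟨y, hy, hy'⟩ := Finset.exists_mem_notMem_of_card_lt_card (s := {p, r})
    (t := absValues α) (by rw [Finset.card_pair hpr]; omega)
  simp only [Finset.mem_insert, Finset.mem_singleton, not_or] at hy'
  have hVeq : absValues α = {p, y, r} := (Finset.eq_of_subset_of_card_le
    (by simp [Finset.insert_subset_iff, hp, hy, hr])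
    (by rw [hV3, Finset.card_eq_three.2 ⟨p, y, r, Ne.symm hy'.1, hpr, hy'.2, rfl⟩])).symm
  have hVeq' : absValues α = {r, y, p} := by
    rw [hVeq, Finset.insert_comm, Finset.pair_comm, Finset.insert_comm]
  have := hα.eq_two_mul_of_levelDegree_eq_two hJ hu hVeq (Ne.symm hy'.1) hpr hy'.2 h2 hpu hrw
  have := hα.eq_two_mul_of_levelDegree_eq_two hJ' hw hVeq' (Ne.symm hy'.2) hpr.symm hy'.1 h2'
    hrw hpu
  exact hpr (by omega)

theorem eq_two_mul_or_of_mem_absValues (hα : IsCircuitVec G.config α) (hx : x ∈ absValues α)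
    (hy : y ∈ absValues α) (hxy : x ≠ y) : x = 2 * y ∨ y = 2 * x := by
  obtain ⟨l, hl, hload⟩ := hα.exists_levelLoad_ne_zero hx hy hxy
  rcases hα.junctions_cases with hJ | ⟨u, hJ, hu⟩ | ⟨u, w, huw, hJ, hu, hw⟩
  · simp [hJ] at hl
  · exact absurd (Finset.card_le_one.1
      (hα.card_absValues_le_one_of_junctions_eq_singleton hJ hu) x hx y hy) hxy
  · have hV : absValues α = {x, y} := (Finset.eq_of_subset_of_card_le
      (by simp [Finset.insert_subset_iff, hx, hy])
      (by rw [Finset.card_pair hxy]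
          exact hα.card_absValues_le_two_of_junctions_eq_pair huw hJ hu hw)).symm
    have hl3 : G.degree α l = 3 := by
      rw [hJ, Finset.mem_insert, Finset.mem_singleton] at hl
      rcases hl with rfl | rfl <;> assumption
    exact hα.isBalanced.eq_two_mul_or_of_degree_eq_three hl3 hV hxy hload

theorem exists_abs_eq_or_eq_two_mul (hα : IsCircuitVec G.config α) :
    ∃ m > 0, ∀ k, α k ≠ 0 → |α k| = m ∨ |α k| = 2 * m := by
  obtain ⟨k₀, hk₀⟩ := hα.exists_ne_zero
  have hmem : ∀ k, α k ≠ 0 → |α k| ∈ absValues α := fun k hk =>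
    Finset.mem_image_of_mem _ (mem_supportFinset.2 hk)
  have hne : (absValues α).Nonempty := ⟨_, hmem k₀ hk₀⟩
  set m := (absValues α).min' hne
  refine ⟨m, pos_of_mem_absValues (Finset.min'_mem _ hne), fun k hk => ?_⟩
  have hle : m ≤ |α k| := Finset.min'_le _ _ (hmem k hk)
  have hpos := pos_of_mem_absValues (hmem k hk)
  by_cases h : |α k| = m
  · exact Or.inl h
  · rcases hα.eq_two_mul_or_of_mem_absValues (hmem k hk) (Finset.min'_mem _ hne) h with h' | h'
    · exact Or.inr h'
    · omega

end IsCircuitVec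

theorem sqFreePair_or_balanced_two_of_abs_le_two {q : ℕ} {α : Fin q → ℤ}
    (h : ∀ k, |α k| ≤ 2) :
    SqFreePair (posExp α) (negExp α) ∨
      (¬ SqFreePair (posExp α) (negExp α) ∧
        Finset.univ.sup (posExp α) = 2 ∧ Finset.univ.sup (negExp α) = 2) := by
  by_cases hsq : SqFreePair (posExp α) (negExp α)
  · exact Or.inl hsq
  refine Or.inr ⟨hsq, ?_, ?_⟩ <;> simp only [SqFreePair, not_or, not_forall, not_le] at hsq
  · obtain ⟨i, hi⟩ := hsq.1
    refine le_antisymm (Finset.sup_le fun k _ => ?_) (Finset.le_sup_of_le (Finset.mem_univ i) hi)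
    have := abs_le.1 (h k)
    simp only [posExp]
    omega
  · obtain ⟨i, hi⟩ := hsq.2
    refine le_antisymm (Finset.sup_le fun k _ => ?_) (Finset.le_sup_of_le (Finset.mem_univ i) hi)
    have := abs_le.1 (h k)
    simp only [negExp]
    omega

/-- For the configuration of characteristic vectors of the edges of a multigraph `G`
(edge `k` has endpoints `e₁ k`, `e₂ k`; loops have `e₁ k = e₂ k`), every circuit
`T^a - T^b` of the toric ideal has a square-free term, or it has non-square-free terms
and `max_i a_i = max_i b_i = 2`. -/
theorem circuit_of_multigraph_sqFree_or_balanced_two {n q : ℕ}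
    (e₁ e₂ : Fin q → Fin n) (v : Fin q → Fin n → ℤ)
    (hv : ∀ k l, v k l = (if e₁ k = l then 1 else 0) + (if e₂ k = l then 1 else 0))
    (α : Fin q → ℤ) (hα : IsCircuitVec v α) :
    SqFreePair (posExp α) (negExp α) ∨
      (¬ SqFreePair (posExp α) (negExp α) ∧
        Finset.univ.sup (posExp α) = 2 ∧ Finset.univ.sup (negExp α) = 2) := by
  have hvG : v = (⟨e₁, e₂⟩ : FinMultigraph n q).config := by
    funext k l
    simp [hv, FinMultigraph.config, FinMultigraph.inc]
  subst hvG
  obtain ⟨m, hm, hαm⟩ := hα.exists_abs_eq_or_eq_two_mul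
  have hm1 : m = 1 := by
    have hdvd : m ∣ Finset.univ.gcd α := Finset.dvd_gcd fun k _ => by
      by_cases hk : α k = 0
      · simp [hk]
      · rcases hαm k hk with h | h <;> rw [← dvd_abs, h]
        exact dvd_mul_left m 2
    rw [hα.2.2.2] at hdvd
    exact Int.eq_one_of_dvd_one hm.le hdvd
  refine sqFreePair_or_balanced_two_of_abs_le_two fun k => ?_
  by_cases hk : α k = 0
  · simp [hk]
  · rcases hαm k hk with h | h <;> omega
end
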